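/- arXiv:math/0304162 — 4 statements merged into one kernel-verified Lean document; each statement's English description precedes it below -/
import Mathlib

section
/- If a degree vector m ∈ ℤ^r yields a pure Bézout-type complex, then there exists a permutation π of {1,…,r} such that m_i ≥ m^π_i for all i = 1,…,r, where m^π_k = −l_k + d_k·Σ_{j : π(j) ≥ π(k)} l_j. -/
open Finset

/-- `n = l₁ + ⋯ + l_r`, as an integer. -/
def nDim {r : ℕ} (l : Fin r → ℕ) : ℤ := ∑ k, (l k : ℤ)

/-- The defect vector: `δ_k = l_k − ⌈l_k / d_k⌉`. -/
def defect {r : ℕ} (l d : Fin r → ℕ) (k : Fin r) : ℤ :=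
  (l k : ℤ) - ⌈(l k : ℚ) / (d k : ℚ)⌉

/-- `P_k(m) = {p ∈ ℤ : m_k/d_k < p ≤ (m_k + l_k)/d_k}`. -/
def Pset {r : ℕ} (l d : Fin r → ℕ) (m : Fin r → ℤ) (k : Fin r) : Set ℤ :=
  {p : ℤ | (m k : ℚ) / (d k : ℚ) < (p : ℚ) ∧
    (p : ℚ) ≤ ((m k : ℚ) + (l k : ℚ)) / (d k : ℚ)}

/-- The `(p,J)`-summand of `m` is nonzero: `m_k − p d_k ≤ −l_k − 1` for `k ∈ J`
and `m_k − p d_k ≥ 0` for `k ∉ J`. -/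
def SummandNonzero {r : ℕ} (l d : Fin r → ℕ) (m : Fin r → ℤ) (p : ℤ)
    (J : Finset (Fin r)) : Prop :=
  (∀ k ∈ J, m k - p * d k ≤ -(l k : ℤ) - 1) ∧ ∀ k ∉ J, 0 ≤ m k - p * d k

/-- `K_ν(m) = 0`: every `(p,J)`-summand with `p ∈ {0,…,n+1}` and
`p − Σ_{k∈J} l_k = ν` is zero. -/
def Kvanish {r : ℕ} (l d : Fin r → ℕ) (m : Fin r → ℤ) (ν : ℤ) : Prop :=
  ∀ p : ℤ, 0 ≤ p → p ≤ nDim l + 1 →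
    ∀ J : Finset (Fin r), p - ∑ k ∈ J, (l k : ℤ) = ν → ¬ SummandNonzero l d m p J

/-- `m` is determinantal iff `K_{-1}(m) = 0` and `K_2(m) = 0`. -/
def Determinantal {r : ℕ} (l d : Fin r → ℕ) (m : Fin r → ℤ) : Prop :=
  Kvanish l d m (-1) ∧ Kvanish l d m 2

open scoped Classical in
/-- The dimension of the `(p,J)`-summand of `m`. -/
noncomputable def dimSummand {r : ℕ} (l d : Fin r → ℕ) (m : Fin r → ℤ) (p : ℤ)
    (J : Finset (Fin r)) : ℕ :=
  if SummandNonzero l d m p J then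
    (∏ k ∈ J, (p * d k - m k - 1).toNat.choose (l k)) *
      ∏ k ∈ Jᶜ, (m k - p * d k + l k).toNat.choose (l k)
  else 0

open scoped Classical in
/-- `dim K_ν(m)`. -/
noncomputable def dimK {r : ℕ} (l d : Fin r → ℕ) (m : Fin r → ℤ) (ν : ℤ) : ℕ :=
  ∑ p ∈ Finset.range ((∑ k, l k) + 2),
    ((∑ k, l k) + 1).choose p *
      ∑ J ∈ Finset.univ.filter
          (fun J : Finset (Fin r) => (p : ℤ) - ∑ k ∈ J, (l k : ℤ) = ν),
        dimSummand l d m (p : ℤ) J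

/-- `m′`: agrees with `m` except `m′_k = m_k + d_k − [m_k]_k − 1`. -/
def mprime {r : ℕ} (d : Fin r → ℕ) (m : Fin r → ℤ) (k : Fin r) : Fin r → ℤ :=
  Function.update m k (m k + d k - m k % (d k : ℤ) - 1)

/-- `m″`: agrees with `m` except `m″_k = m_k − [m_k + l_k]_k`. -/
def msecond {r : ℕ} (l d : Fin r → ℕ) (m : Fin r → ℤ) (k : Fin r) : Fin r → ℤ :=
  Function.update m k (m k - (m k + l k) % (d k : ℤ))

/-- The critical degree vector `ρ_k = (n+1) d_k − l_k − 1`. -/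
def critical {r : ℕ} (l d : Fin r → ℕ) (k : Fin r) : ℤ :=
  (nDim l + 1) * d k - l k - 1

/-- `m` yields a pure Sylvester-type matrix. -/
def PureSylvester {r : ℕ} (l d : Fin r → ℕ) (m : Fin r → ℤ) : Prop :=
  (∀ k, 0 ≤ m k) ∧ (∀ k, (d k : ℤ) ≤ m k) ∧ Kvanish l d m (-1) ∧
  ∀ ν : ℤ, (ν = 0 ∨ ν = 1) →
    ∀ p : ℤ, 0 ≤ p → p ≤ nDim l + 1 → ∀ J : Finset (Fin r), J ≠ ∅ →
      p - ∑ k ∈ J, (l k : ℤ) = ν → ¬ SummandNonzero l d m p J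

/-- `m` yields a pure Bézout-type complex. -/
def PureBezout {r : ℕ} (l d : Fin r → ℕ) (m : Fin r → ℤ) : Prop :=
  Kvanish l d m (-1) ∧
  SummandNonzero l d m 0 ∅ ∧
  (∀ p : ℤ, 0 ≤ p → p ≤ nDim l + 1 → ∀ J : Finset (Fin r), J ≠ ∅ →
      p - ∑ k ∈ J, (l k : ℤ) = 0 → ¬ SummandNonzero l d m p J) ∧
  SummandNonzero l d m (nDim l + 1) Finset.univ ∧
  (∀ p : ℤ, 0 ≤ p → p ≤ nDim l + 1 → ∀ J : Finset (Fin r),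
      ¬(p = nDim l + 1 ∧ J = Finset.univ) →
      p - ∑ k ∈ J, (l k : ℤ) = 1 → ¬ SummandNonzero l d m p J)

/-- The Sylvester degree vector `m^π_k = (1 + Σ_{π(j) ≥ π(k)} l_j) d_k − l_k`. -/
def mSyl {r : ℕ} (l d : Fin r → ℕ) (π : Equiv.Perm (Fin r)) (k : Fin r) : ℤ :=
  (1 + ∑ j ∈ Finset.univ.filter (fun j => π k ≤ π j), (l j : ℤ)) * d k - l k

/-- The Bézout degree vector `m^π_k = −l_k + d_k Σ_{π(j) ≥ π(k)} l_j`. -/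
def mBez {r : ℕ} (l d : Fin r → ℕ) (π : Equiv.Perm (Fin r)) (k : Fin r) : ℤ :=
  -(l k : ℤ) + (d k : ℤ) * ∑ j ∈ Finset.univ.filter (fun j => π k ≤ π j), (l j : ℤ)

/-!
For each coordinate `k` the `k`-th Künneth factor of `H^*(X, m - p d)` is `H^0` for
`p ≤ m_k / d_k`, is `H^{l_k}` for `p ≥ (m_k + l_k) / d_k + 1 =: S_k`, and vanishes on the gap
strictly in between, which contains at most `l_k` integers. At a `p` outside all gaps the summand
with `J = {k : S_k ≤ p}` is nonzero, so `K_0(m) = 0` says that `φ(p) = p - Σ_{S_k ≤ p} l_k`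
never vanishes at such `p ∈ [1, n]`, while `K_1(m) ≠ 0` says that all `S_k ≤ n + 1`, whence
`φ(n + 1) = 1`. If `φ` were `≤ 0` somewhere on `[1, n]`, at the largest such `q` it would be `0`
(`φ` grows by at most one per step), so `q` lies in a gap; the run of gap points from `q` up to
the next gap-free point `Q` is covered by gaps of coordinates with `q < S_k ≤ Q`, and counting
gives `φ(Q) ≤ 0`, a contradiction. So `φ ≥ 1` on `[1, n]`. Since `H^0(X, m) ≠ 0` gives
`S_i ≥ 1`, the value `φ(W) ≤ 0` at `W = Σ_{S_j ≤ S_i} l_j` then rules out `S_i ≤ W`; and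
`S_i > W` is `m ≥ m^π` at `i` for `π` ordering the `S_k` decreasingly.
-/

theorem exists_perm_antitone {α : Type*} [LinearOrder α] {r : ℕ} (f : Fin r → α) :
    ∃ π : Equiv.Perm (Fin r), ∀ i j, π i ≤ π j → f j ≤ f i := by
  refine ⟨(Tuple.sort (OrderDual.toDual ∘ f))⁻¹, fun i j hij => ?_⟩
  simpa [Equiv.Perm.inv_def] using Tuple.monotone_sort (OrderDual.toDual ∘ f) hij

namespace WeightedGaps

variable {ι : Type*} (S T : ι → ℤ) (w : ι → ℕ)

def InGap (p : ℤ) : Prop :=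
  ∃ k, T k < p ∧ p < S k

variable [Fintype ι]

def excess (q : ℤ) : ℤ :=
  q - ∑ k ∈ univ.filter (fun k => S k ≤ q), (w k : ℤ)

variable {S T w}

theorem excess_eq_add_sub {q Q : ℤ} (hqQ : q ≤ Q) :
    excess S w Q = excess S w q + (Q - q) -
      ∑ k ∈ univ.filter (fun k => q < S k ∧ S k ≤ Q), (w k : ℤ) := by
  rw [excess, excess, ← sum_filter_add_sum_filter_not (univ.filter fun k => S k ≤ Q)
    (fun k => S k ≤ q), filter_filter, filter_filter]
  have hlow : univ.filter (fun k => S k ≤ Q ∧ S k ≤ q) = univ.filter (fun k => S k ≤ q) :=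
    filter_congr fun k _ => by omega
  have hmid : univ.filter (fun k => S k ≤ Q ∧ ¬S k ≤ q) =
      univ.filter (fun k => q < S k ∧ S k ≤ Q) :=
    filter_congr fun k _ => by omega
  rw [hlow, hmid]
  ring

theorem excess_add_one_le (q : ℤ) : excess S w (q + 1) ≤ excess S w q + 1 := by
  rw [excess_eq_add_sub (le_add_of_nonneg_right zero_le_one)]
  have : 0 ≤ ∑ k ∈ univ.filter (fun k => q < S k ∧ S k ≤ q + 1), (w k : ℤ) :=
    sum_nonneg fun k _ => by positivity
  linarith

theorem excess_sum_add_one (htop : ∀ k, S k ≤ ∑ j, (w j : ℤ) + 1) :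
    excess S w (∑ j, (w j : ℤ) + 1) = 1 := by
  rw [excess, filter_true_of_mem fun k _ => htop k]
  ring

theorem sub_le_sum_of_forall_inGap (hwin : ∀ k, S k - T k ≤ w k + 1) {q Q : ℤ}
    (hgap : ∀ p, q ≤ p → p < Q → InGap S T p) (hQ : ¬InGap S T Q) :
    Q - q ≤ ∑ k ∈ univ.filter (fun k => q < S k ∧ S k ≤ Q), (w k : ℤ) := by
  classical
  have hcover : Ico q Q ⊆
      (univ.filter fun k => q < S k ∧ S k ≤ Q).biUnion fun k => Ioo (T k) (S k) := by
    intro p hp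
    obtain ⟨hqp, hpQ⟩ := mem_Ico.1 hp
    obtain ⟨k, hTk, hSk⟩ := hgap p hqp hpQ
    have hSQ : S k ≤ Q := not_lt.1 fun h => hQ ⟨k, by omega, h⟩
    simp only [mem_biUnion, mem_filter, mem_univ, true_and, mem_Ioo]
    exact ⟨k, ⟨by omega, hSQ⟩, hTk, hSk⟩
  calc Q - q ≤ (#(Ico q Q) : ℤ) := by rw [Int.card_Ico]; omega
    _ ≤ ∑ k ∈ univ.filter (fun k => q < S k ∧ S k ≤ Q), (#(Ioo (T k) (S k)) : ℤ) := by
      exact_mod_cast (card_le_card hcover).trans card_biUnion_le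
    _ ≤ ∑ k ∈ univ.filter (fun k => q < S k ∧ S k ≤ Q), (w k : ℤ) :=
      sum_le_sum fun k _ => by rw [Int.card_Ioo]; have := hwin k; omega

theorem exists_excess_le_of_inGap (hwin : ∀ k, S k - T k ≤ w k + 1) {q R : ℤ}
    (hq : InGap S T q) (hR : ¬InGap S T R) (hqR : q ≤ R) :
    ∃ Q, q < Q ∧ Q ≤ R ∧ excess S w Q ≤ excess S w q := by
  obtain ⟨Q, ⟨hqQ, hQ⟩, hmin⟩ := Int.exists_least_of_bdd
    (P := fun p => q ≤ p ∧ ¬InGap S T p) ⟨q, fun _ h => h.1⟩ ⟨R, hqR, hR⟩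
  have hlt : q < Q := lt_of_le_of_ne hqQ fun h => hQ (h ▸ hq)
  have hrun : ∀ p, q ≤ p → p < Q → InGap S T p :=
    fun p hqp hpQ => not_not.1 fun h => (hmin p ⟨hqp, h⟩).not_gt hpQ
  refine ⟨Q, hlt, hmin R ⟨hqR, hR⟩, ?_⟩
  rw [excess_eq_add_sub hqQ]
  linarith [sub_le_sum_of_forall_inGap hwin hrun hQ]

theorem one_le_excess (hwin : ∀ k, S k - T k ≤ w k + 1)
    (htop : ∀ k, S k ≤ ∑ j, (w j : ℤ) + 1)
    (hgap : ∀ q, 1 ≤ q → q ≤ ∑ j, (w j : ℤ) → ¬InGap S T q → excess S w q ≠ 0)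
    {q : ℤ} (h1 : 1 ≤ q) (hN : q ≤ ∑ j, (w j : ℤ)) : 1 ≤ excess S w q := by
  by_contra! hq
  obtain ⟨q₀, ⟨h1₀, hN₀, hq₀⟩, hmax⟩ := Int.exists_greatest_of_bdd
    (P := fun p => 1 ≤ p ∧ p ≤ ∑ j, (w j : ℤ) ∧ excess S w p < 1)
    ⟨_, fun _ h => h.2.1⟩ ⟨q, h1, hN, hq⟩
  have habove : ∀ p, q₀ < p → p ≤ ∑ j, (w j : ℤ) + 1 → 1 ≤ excess S w p := by
    intro p hp hpN
    rcases hpN.lt_or_eq with hpN | rfl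
    · exact not_lt.1 fun h => (hmax p ⟨by omega, by omega, h⟩).not_gt hp
    · exact (excess_sum_add_one htop).ge
  have hzero : excess S w q₀ = 0 := by
    linarith [habove (q₀ + 1) (by omega) (by omega), excess_add_one_le (S := S) (w := w) q₀]
  have hq₀gap : InGap S T q₀ := not_not.1 fun h => hgap q₀ h1₀ hN₀ h hzero
  obtain ⟨Q, hqQ, hQN, hQ⟩ :=
    exists_excess_le_of_inGap hwin hq₀gap (fun ⟨k, _, hk⟩ => (htop k).not_gt hk) (by omega)
  linarith [habove Q hqQ hQN]

theorem sum_lt_of_one_le_excess (hpos : ∀ k, 0 < S k)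
    (hexc : ∀ q, 1 ≤ q → q ≤ ∑ j, (w j : ℤ) → 1 ≤ excess S w q) (i : ι) :
    ∑ j ∈ univ.filter (fun j => S j ≤ S i), (w j : ℤ) < S i := by
  set W := ∑ j ∈ univ.filter (fun j => S j ≤ S i), (w j : ℤ)
  by_contra! hW
  have hWN : W ≤ ∑ j, (w j : ℤ) :=
    sum_le_sum_of_subset_of_nonneg (subset_univ _) fun _ _ _ => by positivity
  have hsub : W ≤ ∑ j ∈ univ.filter (fun j => S j ≤ W), (w j : ℤ) :=
    sum_le_sum_of_subset_of_nonneg (monotone_filter_right _ fun j _ h => h.trans hW)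
      fun _ _ _ => by positivity
  have := hexc W (by linarith [hpos i]) hWN
  rw [excess] at this
  linarith

end WeightedGaps

open WeightedGaps

section Bezout

variable {r : ℕ} (l d : Fin r → ℕ) (m : Fin r → ℤ)

def firstTop (k : Fin r) : ℤ := (m k + l k) / d k + 1

def lastZero (k : Fin r) : ℤ := m k / d k

variable {l d m}

theorem le_lastZero_iff {k : Fin r} (hk : 0 < d k) {p : ℤ} :
    p ≤ lastZero d m k ↔ 0 ≤ m k - p * d k := by
  rw [lastZero, Int.le_ediv_iff_mul_le (by exact_mod_cast hk), sub_nonneg]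

theorem firstTop_le_iff {k : Fin r} (hk : 0 < d k) {p : ℤ} :
    firstTop l d m k ≤ p ↔ m k - p * d k ≤ -(l k : ℤ) - 1 := by
  rw [firstTop, Int.add_one_le_iff, Int.ediv_lt_iff_lt_mul (by exact_mod_cast hk)]
  omega

theorem firstTop_sub_lastZero_le {k : Fin r} (hk : 0 < d k) :
    firstTop l d m k - lastZero d m k ≤ l k + 1 := by
  suffices firstTop l d m k ≤ lastZero d m k + l k + 1 by omega
  have hnext := (le_lastZero_iff (m := m) hk).not.1 (lt_add_one (lastZero d m k)).not_ge
  have hl : (l k : ℤ) ≤ l k * d k :=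
    le_mul_of_one_le_right (by positivity) (by exact_mod_cast hk)
  rw [firstTop_le_iff hk]
  linarith

theorem summandNonzero_of_not_inGap (hd : ∀ k, 0 < d k) {p : ℤ}
    (hp : ¬InGap (firstTop l d m) (lastZero d m) p) :
    SummandNonzero l d m p (univ.filter fun k => firstTop l d m k ≤ p) := by
  refine ⟨fun k hk => (firstTop_le_iff (hd k)).1 (mem_filter.1 hk).2, fun k hk => ?_⟩
  rw [← le_lastZero_iff (hd k)]
  by_contra! h
  exact hp ⟨k, h, by simpa using hk⟩

namespace PureBezout

theorem firstTop_pos (hB : PureBezout l d m) (k : Fin r) : 0 < firstTop l d m k := by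
  have hm : 0 ≤ m k := by simpa using hB.2.1.2 k (notMem_empty k)
  have : 0 ≤ (m k + l k) / (d k : ℤ) := Int.ediv_nonneg (by positivity) (by positivity)
  rw [firstTop]
  omega

theorem firstTop_le (hB : PureBezout l d m) (hd : ∀ k, 0 < d k) (k : Fin r) :
    firstTop l d m k ≤ nDim l + 1 :=
  (firstTop_le_iff (hd k)).2 (hB.2.2.2.1.1 k (mem_univ k))

theorem excess_ne_zero (hB : PureBezout l d m) (hd : ∀ k, 0 < d k) (q : ℤ) (h1 : 1 ≤ q)
    (hN : q ≤ nDim l) (hq : ¬InGap (firstTop l d m) (lastZero d m) q) :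
    excess (firstTop l d m) l q ≠ 0 := by
  intro h0
  refine hB.2.2.1 q (by omega) (by omega) _ (fun hJ => ?_) h0 (summandNonzero_of_not_inGap hd hq)
  rw [excess, hJ, sum_empty] at h0
  omega

end PureBezout

end Bezout

theorem bezout_lower_bound_general (r : ℕ) (l d : Fin r → ℕ) (hd : ∀ k, 0 < d k)
    (m : Fin r → ℤ) (hB : PureBezout l d m) :
    ∃ π : Equiv.Perm (Fin r), ∀ i, mBez l d π i ≤ m i := by
  have hexc : ∀ q, 1 ≤ q → q ≤ nDim l → 1 ≤ excess (firstTop l d m) l q :=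
    fun q => one_le_excess (T := lastZero d m) (fun k => firstTop_sub_lastZero_le (hd k))
      (hB.firstTop_le hd) (hB.excess_ne_zero hd)
  obtain ⟨π, hπ⟩ := exists_perm_antitone (firstTop l d m)
  refine ⟨π, fun i => ?_⟩
  have hsub : ∑ j ∈ univ.filter (fun j => π i ≤ π j), (l j : ℤ) ≤
      ∑ j ∈ univ.filter (fun j => firstTop l d m j ≤ firstTop l d m i), (l j : ℤ) :=
    sum_le_sum_of_subset_of_nonneg (monotone_filter_right _ fun j _ => hπ i j)
      fun _ _ _ => by positivity
  have hlt := hsub.trans_lt (sum_lt_of_one_le_excess hB.firstTop_pos hexc i)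
  have hbound := (firstTop_le_iff (m := m) (hd i)).not.1 hlt.not_ge
  rw [mBez]
  linarith

/-- If `m` yields a pure Bézout-type complex, then `m ≥ m^π` coordinatewise for some
permutation `π`, where `m^π_k = −l_k + d_k Σ_{π(j) ≥ π(k)} l_j`. -/
theorem bezout_lower_bound (r : ℕ) (hr : 0 < r) (l d : Fin r → ℕ) (hl : ∀ k, 0 < l k) (hd : ∀ k, 0 < d k)
    (m : Fin r → ℤ) (hB : PureBezout l d m) :
    ∃ π : Equiv.Perm (Fin r), ∀ i, mBez l d π i ≤ m i :=
  bezout_lower_bound_general r l d hd m hB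
end

section
/- A degree vector m ∈ ℤ^r yields a pure Bézout-type complex if and only if δ_k = 0 for all k = 1,…,r and m = m^π for some permutation π of {1,…,r}, where m^π_k = −l_k + d_k·Σ_{j : π(j) ≥ π(k)} l_j. -/
open Finset

namespace BezAux
open Finset

variable {r : ℕ}

/-- `A k = ⌊m k / d k⌋`: the largest `p` with the `k ∉ J` condition. -/
def AA (d : Fin r → ℕ) (m : Fin r → ℤ) (k : Fin r) : ℤ := m k / (d k : ℤ)

/-- `B k`: the smallest `p` with the `k ∈ J` condition. -/
def BB (l d : Fin r → ℕ) (m : Fin r → ℤ) (k : Fin r) : ℤ :=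
  (m k + (l k : ℤ)) / (d k : ℤ) + 1

lemma summand_iff (l d : Fin r → ℕ) (m : Fin r → ℤ) (hd : ∀ k, 0 < d k)
    (p : ℤ) (J : Finset (Fin r)) :
    SummandNonzero l d m p J ↔
      (∀ k ∈ J, BB l d m k ≤ p) ∧ ∀ k ∉ J, p ≤ AA d m k := by
  unfold SummandNonzero AA BB
  constructor
  · rintro ⟨h1, h2⟩
    refine ⟨fun k hk => ?_, fun k hk => ?_⟩
    · have h := h1 k hk
      have hdk : (0:ℤ) < (d k : ℤ) := by exact_mod_cast hd k
      have : (m k + (l k : ℤ)) / (d k : ℤ) < p :=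
        (Int.ediv_lt_iff_lt_mul hdk).2 (by linarith)
      omega
    · have h := h2 k hk
      have hdk : (0:ℤ) < (d k : ℤ) := by exact_mod_cast hd k
      exact (Int.le_ediv_iff_mul_le hdk).2 (by linarith)
  · rintro ⟨h1, h2⟩
    refine ⟨fun k hk => ?_, fun k hk => ?_⟩
    · have h := h1 k hk
      have hdk : (0:ℤ) < (d k : ℤ) := by exact_mod_cast hd k
      have : (m k + (l k : ℤ)) / (d k : ℤ) < p := by omega
      have := (Int.ediv_lt_iff_lt_mul hdk).1 this
      linarith
    · have h := h2 k hk
      have hdk : (0:ℤ) < (d k : ℤ) := by exact_mod_cast hd k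
      have := (Int.le_ediv_iff_mul_le hdk).1 h
      linarith

lemma AA_lt_BB (l d : Fin r → ℕ) (m : Fin r → ℤ) (hd : ∀ k, 0 < d k) (k : Fin r) :
    AA d m k < BB l d m k := by
  unfold AA BB
  have hdk : (0:ℤ) < (d k : ℤ) := by exact_mod_cast hd k
  have : m k / (d k : ℤ) ≤ (m k + (l k : ℤ)) / (d k : ℤ) :=
    Int.ediv_le_ediv hdk (by omega)
  omega

lemma gap_le (l d : Fin r → ℕ) (m : Fin r → ℤ) (hd : ∀ k, 0 < d k) (k : Fin r) :
    BB l d m k - AA d m k - 1 ≤ (l k : ℤ) := by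
  unfold AA BB
  have hdk : (0:ℤ) < (d k : ℤ) := by exact_mod_cast hd k
  have h1 : (m k + (l k : ℤ)) ≤ m k + (l k : ℤ) * (d k : ℤ) := by nlinarith
  have h2 : (m k + (l k : ℤ)) / (d k : ℤ) ≤ (m k + (l k : ℤ) * (d k : ℤ)) / (d k : ℤ) :=
    Int.ediv_le_ediv hdk h1
  have h3 : (m k + (l k : ℤ) * (d k : ℤ)) / (d k : ℤ) = m k / (d k : ℤ) + (l k : ℤ) :=
    Int.add_mul_ediv_right _ _ (by omega)
  omega

/-- `p` is not blocked by any gap. -/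
def NG (l d : Fin r → ℕ) (m : Fin r → ℤ) (p : ℤ) : Prop :=
  ∀ k, p ≤ AA d m k ∨ BB l d m k ≤ p

/-- The would-be index `ν` of the unique summand at a non-gap point `p`. -/
def nuf (l d : Fin r → ℕ) (m : Fin r → ℤ) (p : ℤ) : ℤ :=
  p - ∑ k ∈ univ.filter (fun k => BB l d m k ≤ p), (l k : ℤ)

end BezAux

namespace BezAux
open Finset

variable {r : ℕ}

lemma nuf_zero (l d : Fin r → ℕ) (m : Fin r → ℤ) (hd : ∀ k, 0 < d k)
    (hA0 : ∀ k, 0 ≤ AA d m k) : nuf l d m 0 = 0 := by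
  unfold nuf
  have : univ.filter (fun k => BB l d m k ≤ (0:ℤ)) = ∅ := by
    refine Finset.filter_eq_empty_iff.2 fun k _ => ?_
    have := AA_lt_BB l d m hd k
    have := hA0 k
    omega
  rw [this]
  simp

lemma jump (l d : Fin r → ℕ) (m : Fin r → ℤ) (hd : ∀ k, 0 < d k)
    (q p : ℤ) (hqp : q < p) (hngp : NG l d m p)
    (hgap : ∀ t, q < t → t < p → ¬ NG l d m t) :
    nuf l d m p ≤ nuf l d m q + 1 := by
  set K := univ.filter (fun k => q < BB l d m k ∧ BB l d m k ≤ p) with hK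
  have hsub : Finset.Ioo q p ⊆ K.biUnion (fun k => Finset.Ioo (AA d m k) (BB l d m k)) := by
    intro t ht
    rw [Finset.mem_Ioo] at ht
    have hng := hgap t ht.1 ht.2
    unfold NG at hng
    push_neg at hng
    obtain ⟨k, hk1, hk2⟩ := hng
    have hBp : BB l d m k ≤ p := by
      rcases hngp k with h | h
      · omega
      · exact h
    refine Finset.mem_biUnion.2 ⟨k, ?_, ?_⟩
    · rw [hK, Finset.mem_filter]
      exact ⟨Finset.mem_univ k, by omega, hBp⟩
    · rw [Finset.mem_Ioo]; omega
  have hcard : (p - q - 1).toNat ≤ ∑ k ∈ K, l k := by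
    calc (p - q - 1).toNat = (Finset.Ioo q p).card := (Int.card_Ioo q p).symm
    _ ≤ (K.biUnion (fun k => Finset.Ioo (AA d m k) (BB l d m k))).card :=
        Finset.card_le_card hsub
    _ ≤ ∑ k ∈ K, (Finset.Ioo (AA d m k) (BB l d m k)).card := Finset.card_biUnion_le
    _ ≤ ∑ k ∈ K, l k := by
        refine Finset.sum_le_sum fun k _ => ?_
        rw [Int.card_Ioo]
        have := gap_le l d m hd k
        omega
  have hcardZ : p - q - 1 ≤ ∑ k ∈ K, (l k : ℤ) := by
    have : ((p - q - 1).toNat : ℤ) ≤ ((∑ k ∈ K, l k : ℕ) : ℤ) := by exact_mod_cast hcard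
    push_cast at this
    omega
  have hsplit : ∑ k ∈ univ.filter (fun k => BB l d m k ≤ p), (l k : ℤ)
      = ∑ k ∈ univ.filter (fun k => BB l d m k ≤ q), (l k : ℤ) + ∑ k ∈ K, (l k : ℤ) := by
    rw [← Finset.sum_union]
    · congr 1
      ext k
      simp only [hK, Finset.mem_filter, Finset.mem_union, Finset.mem_univ, true_and]
      omega
    · rw [Finset.disjoint_left]
      intro k hk1 hk2
      simp only [hK, Finset.mem_filter, Finset.mem_univ, true_and] at hk1 hk2
      omega
  unfold nuf
  rw [hsplit]
  omega

lemma no_interior (l d : Fin r → ℕ) (m : Fin r → ℤ) (hd : ∀ k, 0 < d k)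
    (hA0 : ∀ k, 0 ≤ AA d m k) (hBn : ∀ k, BB l d m k ≤ nDim l + 1)
    (hband : ∀ p, 1 ≤ p → p ≤ nDim l → NG l d m p →
      nuf l d m p ≤ -2 ∨ 2 ≤ nuf l d m p) :
    ∀ p, 1 ≤ p → p ≤ nDim l → ¬ NG l d m p := by
  classical
  have hNG0 : NG l d m 0 := fun k => Or.inl (hA0 k)
  have hnn0 : (0:ℤ) ≤ nDim l := by
    unfold nDim
    exact Finset.sum_nonneg fun k _ => by positivity
  -- strong induction
  have main : ∀ N : ℕ, ∀ p : ℤ, p.toNat ≤ N → 0 ≤ p → p ≤ nDim l → NG l d m p →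
      nuf l d m p ≤ -2 ∨ p = 0 := by
    intro N
    induction N with
    | zero =>
      intro p hpN hp0 _ _
      right; omega
    | succ N ih =>
      intro p hpN hp0 hpn hng
      by_cases hp : p = 0
      · right; exact hp
      have hp1 : 1 ≤ p := by omega
      -- the largest non-gap point below p
      set S := (Finset.Icc (0:ℤ) (p-1)).filter (fun t => NG l d m t) with hS
      have hSne : S.Nonempty := ⟨0, by
        rw [hS, Finset.mem_filter, Finset.mem_Icc]
        exact ⟨⟨le_refl 0, by omega⟩, hNG0⟩⟩
      obtain ⟨q, hqS, hqmax⟩ := S.exists_max_image id hSne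
      rw [hS, Finset.mem_filter, Finset.mem_Icc] at hqS
      obtain ⟨⟨hq0, hqp⟩, hqng⟩ := hqS
      have hgap : ∀ t, q < t → t < p → ¬ NG l d m t := by
        intro t ht1 ht2 htng
        have : t ∈ S := by
          rw [hS, Finset.mem_filter, Finset.mem_Icc]
          exact ⟨⟨by omega, by omega⟩, htng⟩
        have := hqmax t this
        simp only [id] at this
        omega
      have hjump := jump l d m hd q p (by omega) hng hgap
      have hIH := ih q (by omega) hq0 (by omega) hqng
      have hq_le : nuf l d m q ≤ 0 := by
        rcases hIH with h | h
        · omega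
        · rw [h, nuf_zero l d m hd hA0]
      have := hband p hp1 hpn hng
      left; omega
  intro p hp1 hpn hng
  -- take overall largest non-gap point in [0, nDim l]
  set S := (Finset.Icc (0:ℤ) (nDim l)).filter (fun t => NG l d m t) with hS
  have hSne : S.Nonempty := ⟨p, by
    rw [hS, Finset.mem_filter, Finset.mem_Icc]
    exact ⟨⟨by omega, hpn⟩, hng⟩⟩
  obtain ⟨q, hqS, hqmax⟩ := S.exists_max_image id hSne
  rw [hS, Finset.mem_filter, Finset.mem_Icc] at hqS
  obtain ⟨⟨hq0, hqn⟩, hqng⟩ := hqS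
  have hqp : p ≤ q := by
    have : p ∈ S := by
      rw [hS, Finset.mem_filter, Finset.mem_Icc]
      exact ⟨⟨by omega, hpn⟩, hng⟩
    simpa using hqmax p this
  have hnuq : nuf l d m q ≤ -2 := by
    rcases main q.toNat q (le_refl _) hq0 hqn hqng with h | h
    · exact h
    · omega
  have hgap : ∀ t, q < t → t < nDim l + 1 → ¬ NG l d m t := by
    intro t ht1 ht2 htng
    have : t ∈ S := by
      rw [hS, Finset.mem_filter, Finset.mem_Icc]
      exact ⟨⟨by omega, by omega⟩, htng⟩
    have := hqmax t this
    simp only [id] at this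
    omega
  have hngtop : NG l d m (nDim l + 1) := fun k => Or.inr (hBn k)
  have hjump := jump l d m hd q (nDim l + 1) (by omega) hngtop hgap
  have htop : nuf l d m (nDim l + 1) = 1 := by
    unfold nuf
    have : univ.filter (fun k => BB l d m k ≤ nDim l + 1) = univ :=
      Finset.filter_true_of_mem fun k _ => hBn k
    rw [this]
    unfold nDim
    omega
  omega

end BezAux

namespace BezAux
open Finset

variable {r : ℕ}

lemma defect_zero_of_cases (l d : ℕ) (hl : 0 < l) (hd : 0 < d)
    (h : d = 1 ∨ l = 1) : (l : ℤ) - ⌈(l : ℚ) / (d : ℚ)⌉ = 0 := by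
  rcases h with h | h
  · subst h; simp
  · subst h
    have hd' : (0:ℚ) < (d:ℚ) := by exact_mod_cast hd
    have h1 : ⌈(1 : ℚ) / (d : ℚ)⌉ = 1 := by
      rw [Int.ceil_eq_iff]
      have hpos : (0:ℚ) < 1 / (d:ℚ) := by positivity
      constructor
      · push_cast; linarith
      · push_cast
        rw [div_le_one hd']
        exact_mod_cast hd
    push_cast
    rw [h1]
    norm_num

lemma key_of_defect (l d : ℕ) (hl : 0 < l) (hd : 0 < d)
    (h : (l : ℤ) - ⌈(l : ℚ) / (d : ℚ)⌉ = 0) : (d : ℤ) * ((l : ℤ) - 1) < l := by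
  have hceil : ⌈(l : ℚ) / (d : ℚ)⌉ = (l : ℤ) := by omega
  have hd' : (0:ℚ) < (d:ℚ) := by exact_mod_cast hd
  have h2' : ((l:ℤ) - 1) < ⌈(l : ℚ) / (d : ℚ)⌉ := by omega
  have h2 : (((l:ℤ) - 1 : ℤ) : ℚ) < (l : ℚ) / (d : ℚ) := Int.lt_ceil.1 h2'
  have h3 : (((l:ℤ) - 1 : ℤ) : ℚ) * (d : ℚ) < (l : ℚ) := by
    rw [← lt_div_iff₀ hd']
    exact h2
  have : ((d : ℤ) * ((l : ℤ) - 1) : ℚ) < ((l : ℤ) : ℚ) := by push_cast at h3 ⊢; linarith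
  exact_mod_cast this

/-- The main structure extraction: if the gaps cover `[1, n]`, then all defects
vanish and `m = mBez π` for some permutation. -/
lemma structure_of_tiled (l d : Fin r → ℕ) (m : Fin r → ℤ)
    (hl : ∀ k, 0 < l k) (hd : ∀ k, 0 < d k)
    (hA0 : ∀ k, 0 ≤ AA d m k) (hBn : ∀ k, BB l d m k ≤ nDim l + 1)
    (hcov : ∀ t : ℤ, 1 ≤ t → t ≤ nDim l → ∃ k, AA d m k < t ∧ t < BB l d m k) :
    (∀ k, defect l d k = 0) ∧ ∃ π : Equiv.Perm (Fin r), m = mBez l d π := by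
  classical
  set A := AA d m with hAdef
  set B := BB l d m with hBdef
  have hAB : ∀ k, A k < B k := fun k => AA_lt_BB l d m hd k
  have hgapk : ∀ k, B k - A k - 1 ≤ (l k : ℤ) := fun k => gap_le l d m hd k
  have hAkdef : ∀ k, A k = m k / (d k : ℤ) := fun k => rfl
  have hBkdef : ∀ k, B k = (m k + (l k : ℤ)) / (d k : ℤ) + 1 := fun k => rfl
  set G : Fin r → Finset ℤ := fun k => Finset.Ioo (A k) (B k) with hG
  have hnn : nDim l = ((∑ k, l k : ℕ) : ℤ) := by unfold nDim; push_cast; rfl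
  have hnn0 : (0:ℤ) ≤ nDim l := by rw [hnn]; positivity
  have hsub : Finset.Icc (1:ℤ) (nDim l) ⊆ univ.biUnion G := by
    intro t ht
    rw [Finset.mem_Icc] at ht
    obtain ⟨k, hk1, hk2⟩ := hcov t ht.1 ht.2
    exact Finset.mem_biUnion.2 ⟨k, Finset.mem_univ k, Finset.mem_Ioo.2 ⟨hk1, hk2⟩⟩
  have hGcard_le : ∀ k, (G k).card ≤ l k := by
    intro k
    rw [hG]
    simp only [Int.card_Ioo]
    have := hgapk k
    omega
  have hIcc_card : (Finset.Icc (1:ℤ) (nDim l)).card = ∑ k, l k := by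
    rw [Int.card_Icc, hnn]
    omega
  have hge : ∑ k, l k ≤ ∑ k, (G k).card := by
    calc ∑ k, l k = (Finset.Icc (1:ℤ) (nDim l)).card := hIcc_card.symm
    _ ≤ (univ.biUnion G).card := Finset.card_le_card hsub
    _ ≤ ∑ k, (G k).card := Finset.card_biUnion_le
  have hsum_eq : ∑ k, (G k).card = ∑ k, l k :=
    le_antisymm (Finset.sum_le_sum fun k _ => hGcard_le k) hge
  have hGcard : ∀ k, (G k).card = l k :=
    fun k => (Finset.sum_eq_sum_iff_of_le (fun i _ => hGcard_le i)).1 hsum_eq k (mem_univ k)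
  have hBA : ∀ k, B k = A k + l k + 1 := by
    intro k
    have h1 := hGcard k
    have h2 := hAB k
    rw [hG] at h1
    simp only [Int.card_Ioo] at h1
    omega
  have hdisj : ∀ j k : Fin r, j ≠ k → Disjoint (G j) (G k) := by
    intro j k hjk
    rw [Finset.disjoint_left]
    by_contra hcon
    push_neg at hcon
    obtain ⟨t, htj, htk⟩ := hcon
    have hsub2 : univ.biUnion G ⊆ ((G j).erase t) ∪ ((univ.erase j).biUnion G) := by
      intro x hx
      obtain ⟨i, _, hxi⟩ := Finset.mem_biUnion.1 hx
      rcases eq_or_ne i j with rfl | hij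
      · rcases eq_or_ne x t with rfl | hxt
        · exact Finset.mem_union_right _ (Finset.mem_biUnion.2
            ⟨k, Finset.mem_erase.2 ⟨Ne.symm hjk, mem_univ k⟩, htk⟩)
        · exact Finset.mem_union_left _ (Finset.mem_erase.2 ⟨hxt, hxi⟩)
      · exact Finset.mem_union_right _ (Finset.mem_biUnion.2
          ⟨i, Finset.mem_erase.2 ⟨hij, mem_univ i⟩, hxi⟩)
    have hb1 : (univ.biUnion G).card ≤ (l j - 1) + ∑ i ∈ univ.erase j, (G i).card := by
      calc (univ.biUnion G).card ≤ ((G j).erase t).card + ((univ.erase j).biUnion G).card :=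
        le_trans (Finset.card_le_card hsub2) (Finset.card_union_le _ _)
      _ ≤ (l j - 1) + ∑ i ∈ univ.erase j, (G i).card := by
        refine Nat.add_le_add ?_ Finset.card_biUnion_le
        rw [Finset.card_erase_of_mem htj, hGcard j]
    have hb2 : (G j).card + ∑ i ∈ univ.erase j, (G i).card = ∑ k, (G k).card :=
      Finset.add_sum_erase univ (fun i => (G i).card) (mem_univ j)
    have hb3 : ∑ k, l k ≤ (univ.biUnion G).card :=
      le_trans (le_of_eq hIcc_card.symm) (Finset.card_le_card hsub)
    have hlj := hl j
    have hGj := hGcard j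
    omega
  -- per-index arithmetic: m k = d k * (A k + l k) - l k, and defect k = 0
  have hmain : ∀ k, m k = (d k : ℤ) * (A k + l k) - l k ∧ ((d k) = 1 ∨ (l k) = 1) := by
    intro k
    have hdk : (0:ℤ) < (d k : ℤ) := by exact_mod_cast hd k
    have hlk : (1:ℤ) ≤ (l k : ℤ) := by exact_mod_cast hl k
    have hBk := hBA k
    have hdiv : (m k + (l k : ℤ)) / (d k : ℤ) = A k + l k := by
      have := hBkdef k
      omega
    have hlow : (d k : ℤ) * (A k + l k) ≤ m k + l k := by
      have h1 := Int.mul_ediv_add_emod (m k + (l k : ℤ)) (d k : ℤ)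
      have hmod := Int.emod_nonneg (m k + (l k : ℤ)) (by omega : (d k : ℤ) ≠ 0)
      rw [hdiv] at h1
      omega
    have hAk : (d k : ℤ) * A k ≤ m k ∧ m k < (d k : ℤ) * (A k + 1) := by
      have h1 := Int.mul_ediv_add_emod (m k) (d k : ℤ)
      have h2 := Int.emod_nonneg (m k) (by omega : (d k : ℤ) ≠ 0)
      have h3 := Int.emod_lt_of_pos (m k) hdk
      rw [← hAkdef k] at h1
      constructor <;> nlinarith
    have hs1 : ((d k : ℤ) - 1) * (l k : ℤ) ≤ m k - (d k : ℤ) * A k := by nlinarith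
    have hs2 : m k - (d k : ℤ) * A k ≤ (d k : ℤ) - 1 := by nlinarith [hAk.2]
    have hcase : (d k : ℤ) = 1 ∨ (l k : ℤ) = 1 := by
      by_contra hcon
      push_neg at hcon
      have hd2 : (2:ℤ) ≤ (d k : ℤ) := by omega
      have hl2 : (2:ℤ) ≤ (l k : ℤ) := by omega
      nlinarith
    have hseq : m k - (d k : ℤ) * A k = ((d k : ℤ) - 1) * (l k : ℤ) := by
      rcases hcase with h | h
      · rw [h] at hs1 hs2 ⊢
        have : ((1:ℤ) - 1) * (l k : ℤ) = 0 := by ring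
        rw [this] at hs1 ⊢
        omega
      · rw [h] at hs1 ⊢
        omega
    constructor
    · nlinarith [hseq]
    · rcases hcase with h | h
      · left; exact_mod_cast h
      · right; exact_mod_cast h
  have hdef : ∀ k, defect l d k = 0 := by
    intro k
    unfold defect
    exact defect_zero_of_cases (l k) (d k) (hl k) (hd k) (hmain k).2
  refine ⟨hdef, ?_⟩
  -- distinctness of A values and interval ordering
  have hAne : ∀ j k : Fin r, j ≠ k → A j ≠ A k := by
    intro j k hjk heq
    have h1 : (A j + 1) ∈ G j := by
      rw [hG, Finset.mem_Ioo, hBA j]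
      have := hl j
      omega
    have h2 : (A j + 1) ∈ G k := by
      rw [hG, Finset.mem_Ioo, hBA k, ← heq]
      have := hl k
      omega
    exact (Finset.disjoint_left.1 (hdisj j k hjk) h1) h2
  have hord : ∀ j k : Fin r, A j < A k → A j + l j ≤ A k := by
    intro j k hlt
    by_contra hcon
    push_neg at hcon
    have hjk : j ≠ k := fun h => by rw [h] at hlt; omega
    have h1 : (A k + 1) ∈ G j := by
      rw [hG, Finset.mem_Ioo, hBA j]
      omega
    have h2 : (A k + 1) ∈ G k := by
      rw [hG, Finset.mem_Ioo, hBA k]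
      have := hl k
      omega
    exact (Finset.disjoint_left.1 (hdisj j k hjk) h1) h2
  -- the permutation
  have hcardlt : ∀ k : Fin r, (univ.filter (fun j => A k < A j)).card < r := by
    intro k
    have hss : univ.filter (fun j => A k < A j) ⊂ univ := by
      refine Finset.ssubset_iff_of_subset (Finset.filter_subset _ _) |>.2 ?_
      exact ⟨k, mem_univ k, by simp⟩
    have := Finset.card_lt_card hss
    simpa using this
  set f : Fin r → Fin r := fun k => ⟨_, hcardlt k⟩ with hf
  have hmono : ∀ j k : Fin r, A k < A j → f j < f k := by
    intro j k hlt
    have hss : univ.filter (fun i => A j < A i) ⊂ univ.filter (fun i => A k < A i) := by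
      constructor
      · intro i hi
        rw [Finset.mem_filter] at hi ⊢
        exact ⟨mem_univ i, by omega⟩
      · intro hsub'
        have : j ∈ univ.filter (fun i => A k < A i) := by
          rw [Finset.mem_filter]; exact ⟨mem_univ j, hlt⟩
        have := hsub' this
        rw [Finset.mem_filter] at this
        omega
    exact Finset.card_lt_card hss
  have hinj : Function.Injective f := by
    intro a b hab
    by_contra hne
    rcases lt_trichotomy (A a) (A b) with h | h | h
    · have := hmono b a h
      rw [hab] at this
      exact lt_irrefl _ this
    · exact hAne a b hne h
    · have := hmono a b h
      rw [hab] at this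
      exact lt_irrefl _ this
  refine ⟨Equiv.ofBijective f (Finite.injective_iff_bijective.1 hinj), ?_⟩
  set π : Equiv.Perm (Fin r) := Equiv.ofBijective f (Finite.injective_iff_bijective.1 hinj)
    with hπdef
  have hπapp : ∀ a : Fin r, π a = f a := fun a => rfl
  have hπ : ∀ a b : Fin r, π a < π b ↔ A b < A a := by
    intro a b
    rw [hπapp a, hπapp b]
    constructor
    · intro h
      rcases lt_trichotomy (A a) (A b) with h2 | h2 | h2
      · have := hmono b a h2
        exact absurd (lt_trans h this) (lt_irrefl _)
      · rcases eq_or_ne a b with rfl | hne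
        · exact absurd h (lt_irrefl _)
        · exact absurd h2 (hAne a b hne)
      · exact h2
    · intro h
      exact hmono a b h
  have hπle : ∀ k j : Fin r, (π k ≤ π j ↔ A j ≤ A k) := by
    intro k j
    rw [← not_lt, hπ, not_lt]
  -- the key sum identity
  have hAn : ∀ k, A k ≤ nDim l := by
    intro k
    have h1 := hBn k
    have h2 := hBA k
    have h3 := hl k
    omega
  have hsum : ∀ k : Fin r, ∑ j ∈ univ.filter (fun j => π k ≤ π j), (l j : ℤ) = A k + l k := by
    intro k
    have hfilter : univ.filter (fun j => π k ≤ π j) = univ.filter (fun j => A j ≤ A k) := by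
      ext j
      simp only [Finset.mem_filter, mem_univ, true_and]
      exact hπle k j
    rw [hfilter]
    have hknot : k ∉ univ.filter (fun j => A j < A k) := by
      rw [Finset.mem_filter]
      rintro ⟨-, hc⟩
      exact lt_irrefl _ hc
    have hins : univ.filter (fun j => A j ≤ A k) = insert k (univ.filter (fun j => A j < A k)) := by
      ext j
      simp only [Finset.mem_filter, Finset.mem_insert, mem_univ, true_and]
      constructor
      · intro h
        rcases eq_or_ne j k with rfl | hne
        · exact Or.inl rfl
        · exact Or.inr (lt_of_le_of_ne h (hAne j k hne))
      · rintro (rfl | h)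
        · exact le_refl _
        · omega
    rw [hins, Finset.sum_insert hknot]
    have hIcc : Finset.Icc (1:ℤ) (A k) = (univ.filter (fun j => A j < A k)).biUnion G := by
      ext t
      rw [Finset.mem_Icc, Finset.mem_biUnion]
      constructor
      · intro ⟨ht1, ht2⟩
        obtain ⟨j, hj1, hj2⟩ := hcov t ht1 (le_trans ht2 (hAn k))
        refine ⟨j, ?_, ?_⟩
        · rw [Finset.mem_filter]
          exact ⟨mem_univ j, by omega⟩
        · rw [hG, Finset.mem_Ioo]; exact ⟨hj1, hj2⟩
      · rintro ⟨j, hj1, hj2⟩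
        rw [Finset.mem_filter] at hj1
        rw [hG, Finset.mem_Ioo, hBA j] at hj2
        have h1 := hord j k hj1.2
        have h2 := hA0 j
        constructor <;> omega
    have hcards : (A k).toNat = ∑ j ∈ univ.filter (fun j => A j < A k), l j := by
      have h1 : (Finset.Icc (1:ℤ) (A k)).card = (A k).toNat := by
        rw [Int.card_Icc]; omega
      rw [← h1, hIcc, Finset.card_biUnion]
      · exact Finset.sum_congr rfl fun j _ => hGcard j
      · intro a _ b _ hab
        exact hdisj a b hab
    have hA0k := hA0 k
    have hAkval : (A k : ℤ) = ((∑ j ∈ univ.filter (fun j => A j < A k), l j : ℕ) : ℤ) := by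
      rw [← hcards]; omega
    have hz : ((∑ j ∈ univ.filter (fun j => A j < A k), l j : ℕ) : ℤ)
        = ∑ j ∈ univ.filter (fun j => A j < A k), (l j : ℤ) := by push_cast; rfl
    omega
  funext k
  unfold mBez
  rw [hsum k, (hmain k).1]
  ring
end BezAux

namespace BezAux
open Finset

variable {r : ℕ}

/-- `S k = Σ_{π j ≥ π k} l j`. -/
def SS (l : Fin r → ℕ) (π : Equiv.Perm (Fin r)) (k : Fin r) : ℤ :=
  ∑ j ∈ univ.filter (fun j => π k ≤ π j), (l j : ℤ)

lemma mBez_eq (l d : Fin r → ℕ) (π : Equiv.Perm (Fin r)) (k : Fin r) :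
    mBez l d π k = (d k : ℤ) * SS l π k - l k := by
  unfold mBez SS; ring

lemma SS_le (l : Fin r → ℕ) (π : Equiv.Perm (Fin r)) (k : Fin r) :
    SS l π k ≤ nDim l := by
  unfold SS nDim
  exact Finset.sum_le_sum_of_subset_of_nonneg (Finset.filter_subset _ _)
    (fun i _ _ => by positivity)

lemma SS_split (l : Fin r → ℕ) (π : Equiv.Perm (Fin r)) (k : Fin r) :
    SS l π k = (l k : ℤ) + ∑ j ∈ univ.filter (fun j => π k < π j), (l j : ℤ) := by
  unfold SS
  have hins : univ.filter (fun j => π k ≤ π j)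
      = insert k (univ.filter (fun j => π k < π j)) := by
    ext j
    simp only [Finset.mem_filter, Finset.mem_insert, mem_univ, true_and]
    constructor
    · intro h
      rcases eq_or_lt_of_le h with heq | hlt
      · exact Or.inl (π.injective heq).symm
      · exact Or.inr hlt
    · rintro (rfl | h)
      · exact le_refl _
      · exact le_of_lt h
  rw [hins, Finset.sum_insert (by
    rw [Finset.mem_filter]
    rintro ⟨-, hc⟩
    exact lt_irrefl _ hc)]

lemma SS_sub_nonneg (l : Fin r → ℕ) (π : Equiv.Perm (Fin r)) (k : Fin r) :
    0 ≤ SS l π k - l k := by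
  rw [SS_split]
  have : (0:ℤ) ≤ ∑ j ∈ univ.filter (fun j => π k < π j), (l j : ℤ) :=
    Finset.sum_nonneg fun j _ => by positivity
  omega

lemma SS_ge (l : Fin r → ℕ) (hl : ∀ k, 0 < l k) (π : Equiv.Perm (Fin r)) (k : Fin r) :
    (1:ℤ) ≤ SS l π k := by
  have h1 := SS_sub_nonneg l π k
  have h2 : (1:ℤ) ≤ (l k : ℤ) := by exact_mod_cast hl k
  omega

lemma in_iff (l d : Fin r → ℕ) (hl : ∀ k, 0 < l k) (hd : ∀ k, 0 < d k)
    (hdef : ∀ k, defect l d k = 0) (π : Equiv.Perm (Fin r)) (p : ℤ) (k : Fin r) :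
    0 ≤ mBez l d π k - p * d k ↔ p ≤ SS l π k - l k := by
  have hD : (d k : ℤ) * ((l k : ℤ) - 1) < l k := by
    have := hdef k
    unfold defect at this
    exact key_of_defect (l k) (d k) (hl k) (hd k) this
  have hdk : (0:ℤ) < (d k : ℤ) := by exact_mod_cast hd k
  have hlk : (1:ℤ) ≤ (l k : ℤ) := by exact_mod_cast hl k
  rw [mBez_eq]
  constructor
  · intro h
    have h1 : (l k : ℤ) ≤ (d k : ℤ) * (SS l π k - p) := by nlinarith
    have h2 : (d k : ℤ) * ((l k : ℤ) - 1) < (d k : ℤ) * (SS l π k - p) := by omega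
    have h3 : ((l k : ℤ) - 1) < SS l π k - p := lt_of_mul_lt_mul_left h2 (le_of_lt hdk)
    omega
  · intro h
    have h1 : (l k : ℤ) ≤ SS l π k - p := by omega
    nlinarith

lemma out_iff (l d : Fin r → ℕ) (hd : ∀ k, 0 < d k)
    (π : Equiv.Perm (Fin r)) (p : ℤ) (k : Fin r) :
    mBez l d π k - p * d k ≤ -(l k : ℤ) - 1 ↔ SS l π k + 1 ≤ p := by
  have hdk : (0:ℤ) < (d k : ℤ) := by exact_mod_cast hd k
  rw [mBez_eq]
  constructor
  · intro h
    have h1 : (d k : ℤ) * (SS l π k - p) < 0 := by nlinarith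
    have h2 : SS l π k - p < 0 := by
      by_contra hc
      push_neg at hc
      nlinarith
    omega
  · intro h
    have h1 : SS l π k - p ≤ -1 := by omega
    nlinarith

lemma exists_cover (l : Fin r → ℕ) (hr : 0 < r) (hl : ∀ k, 0 < l k)
    (π : Equiv.Perm (Fin r)) (p : ℤ) (h1 : 1 ≤ p) (h2 : p ≤ nDim l) :
    ∃ k, SS l π k - l k < p ∧ p ≤ SS l π k := by
  classical
  set U := univ.filter (fun k => p ≤ SS l π k) with hU
  have hUne : U.Nonempty := by
    refine ⟨π.symm ⟨0, hr⟩, ?_⟩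
    rw [hU, Finset.mem_filter]
    refine ⟨mem_univ _, ?_⟩
    have hall : univ.filter (fun j => π (π.symm ⟨0, hr⟩) ≤ π j) = univ := by
      refine Finset.filter_true_of_mem fun j _ => ?_
      rw [Equiv.apply_symm_apply]
      exact Fin.le_def.2 (Nat.zero_le _)
    unfold SS
    rw [hall]
    unfold nDim at h2
    exact h2
  obtain ⟨k, hkU, hkmax⟩ := U.exists_max_image (fun k => (π k : ℕ)) hUne
  rw [hU, Finset.mem_filter] at hkU
  refine ⟨k, ?_, hkU.2⟩
  by_contra hcon
  push_neg at hcon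
  have hsum : p ≤ ∑ j ∈ univ.filter (fun j => π k < π j), (l j : ℤ) := by
    have := SS_split l π k
    omega
  have hTne : (univ.filter (fun j => π k < π j)).Nonempty := by
    by_contra hc
    rw [Finset.not_nonempty_iff_eq_empty] at hc
    rw [hc, Finset.sum_empty] at hsum
    omega
  obtain ⟨k', hk'T, hk'min⟩ :=
    (univ.filter (fun j => π k < π j)).exists_min_image (fun j => (π j : ℕ)) hTne
  rw [Finset.mem_filter] at hk'T
  have hfeq : univ.filter (fun j => π k' ≤ π j) = univ.filter (fun j => π k < π j) := by
    ext j
    simp only [Finset.mem_filter, mem_univ, true_and]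
    constructor
    · intro h
      exact lt_of_lt_of_le hk'T.2 h
    · intro h
      have := hk'min j (Finset.mem_filter.2 ⟨mem_univ j, h⟩)
      exact Fin.le_def.2 this
  have hSk' : SS l π k' = ∑ j ∈ univ.filter (fun j => π k < π j), (l j : ℤ) := by
    unfold SS
    rw [hfeq]
  have hk'U : k' ∈ U := by
    rw [hU, Finset.mem_filter]
    exact ⟨mem_univ k', by omega⟩
  have := hkmax k' hk'U
  have hlt : (π k : ℕ) < (π k') := hk'T.2
  omega

lemma classification (l d : Fin r → ℕ) (hr : 0 < r) (hl : ∀ k, 0 < l k)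
    (hd : ∀ k, 0 < d k) (hdef : ∀ k, defect l d k = 0) (π : Equiv.Perm (Fin r))
    (p : ℤ) (J : Finset (Fin r)) (hp0 : 0 ≤ p) (hpn : p ≤ nDim l + 1)
    (hs : SummandNonzero l d (mBez l d π) p J) :
    (p = 0 ∧ J = ∅) ∨ (p = nDim l + 1 ∧ J = Finset.univ) := by
  obtain ⟨hJ, hJc⟩ := hs
  rcases eq_or_ne p 0 with rfl | hne0
  · left
    refine ⟨rfl, Finset.eq_empty_iff_forall_notMem.2 fun k hk => ?_⟩
    have h1 := (out_iff l d hd π 0 k).1 (hJ k hk)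
    have := SS_ge l hl π k
    omega
  rcases eq_or_ne p (nDim l + 1) with rfl | hnetop
  · right
    refine ⟨rfl, Finset.eq_univ_iff_forall.2 fun k => ?_⟩
    by_contra hk
    have h1 := (in_iff l d hl hd hdef π (nDim l + 1) k).1 (hJc k hk)
    have h2 := SS_le l π k
    have h3 : (1:ℤ) ≤ (l k : ℤ) := by exact_mod_cast hl k
    omega
  exfalso
  obtain ⟨k, hc1, hc2⟩ := exists_cover l hr hl π p (by omega) (by omega)
  by_cases hk : k ∈ J
  · have h1 := (out_iff l d hd π p k).1 (hJ k hk)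
    omega
  · have h1 := (in_iff l d hl hd hdef π p k).1 (hJc k hk)
    omega

lemma sum_univ_l (l : Fin r → ℕ) : ∑ k ∈ (univ : Finset (Fin r)), (l k : ℤ) = nDim l := rfl

lemma pureBezout_mBez (l d : Fin r → ℕ) (hr : 0 < r) (hl : ∀ k, 0 < l k)
    (hd : ∀ k, 0 < d k) (hdef : ∀ k, defect l d k = 0) (π : Equiv.Perm (Fin r)) :
    PureBezout l d (mBez l d π) := by
  refine ⟨?_, ?_, ?_, ?_, ?_⟩
  · -- Kvanish (-1)
    intro p hp0 hpn J hJν hs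
    rcases classification l d hr hl hd hdef π p J hp0 hpn hs with ⟨rfl, rfl⟩ | ⟨rfl, rfl⟩
    · simp at hJν
    · rw [sum_univ_l] at hJν
      omega
  · -- (0, ∅) nonzero
    refine ⟨fun k hk => absurd hk (Finset.notMem_empty k), fun k _ => ?_⟩
    rw [show (0:ℤ) * d k = 0 * d k from rfl]
    have := (in_iff l d hl hd hdef π 0 k).2 (SS_sub_nonneg l π k)
    simpa using this
  · -- no other ν = 0
    intro p hp0 hpn J hJne hJν hs
    rcases classification l d hr hl hd hdef π p J hp0 hpn hs with ⟨rfl, rfl⟩ | ⟨rfl, rfl⟩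
    · exact hJne rfl
    · rw [sum_univ_l] at hJν
      omega
  · -- (n+1, univ) nonzero
    refine ⟨fun k _ => ?_, fun k hk => absurd (mem_univ k) hk⟩
    refine (out_iff l d hd π (nDim l + 1) k).2 ?_
    have := SS_le l π k
    omega
  · -- no other ν = 1
    intro p hp0 hpn J hne hJν hs
    rcases classification l d hr hl hd hdef π p J hp0 hpn hs with ⟨rfl, rfl⟩ | ⟨rfl, rfl⟩
    · simp at hJν
    · exact hne ⟨rfl, rfl⟩

end BezAux

/-- `m` yields a pure Bézout-type complex iff all defects vanish and `m = m^π` for some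
permutation `π`, where `m^π_k = −l_k + d_k Σ_{π(j) ≥ π(k)} l_j`. -/
theorem bezout_characterization (r : ℕ) (hr : 0 < r) (l d : Fin r → ℕ) (hl : ∀ k, 0 < l k) (hd : ∀ k, 0 < d k) (m : Fin r → ℤ) :
    PureBezout l d m ↔
      (∀ k, defect l d k = 0) ∧ ∃ π : Equiv.Perm (Fin r), m = mBez l d π := by
  constructor
  · rintro ⟨hK1, h0, hν0, htop, hν1⟩
    -- extract A-nonnegativity and B-boundedness
    have hA0 : ∀ k, 0 ≤ BezAux.AA d m k := by
      have := (BezAux.summand_iff l d m hd 0 ∅).1 h0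
      exact fun k => this.2 k (Finset.notMem_empty k)
    have hBn : ∀ k, BezAux.BB l d m k ≤ nDim l + 1 := by
      have := (BezAux.summand_iff l d m hd (nDim l + 1) Finset.univ).1 htop
      exact fun k => this.1 k (Finset.mem_univ k)
    -- forbidden band
    have hband : ∀ p, 1 ≤ p → p ≤ nDim l → BezAux.NG l d m p →
        BezAux.nuf l d m p ≤ -2 ∨ 2 ≤ BezAux.nuf l d m p := by
      intro p hp1 hpn hng
      set J := Finset.univ.filter (fun k => BezAux.BB l d m k ≤ p) with hJ
      have hsn : SummandNonzero l d m p J := by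
        refine (BezAux.summand_iff l d m hd p J).2 ⟨fun k hk => ?_, fun k hk => ?_⟩
        · rw [hJ, Finset.mem_filter] at hk
          exact hk.2
        · rcases hng k with h | h
          · exact h
          · exact absurd (Finset.mem_filter.2 ⟨Finset.mem_univ k, h⟩) hk
      have hνdef : BezAux.nuf l d m p = p - ∑ k ∈ J, (l k : ℤ) := rfl
      by_contra hcon
      push_neg at hcon
      have hint : BezAux.nuf l d m p = -1 ∨ BezAux.nuf l d m p = 0 ∨
          BezAux.nuf l d m p = 1 := by omega
      rcases hint with hv | hv | hv
      · exact hK1 p (by omega) (by omega) J (by omega) hsn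
      · have hJne : J ≠ ∅ := by
          intro hc
          rw [hc, Finset.sum_empty] at hνdef
          omega
        exact hν0 p (by omega) (by omega) J hJne (by omega) hsn
      · refine hν1 p (by omega) (by omega) J ?_ (by omega) hsn
        rintro ⟨hc, -⟩
        omega
    have hnog := BezAux.no_interior l d m hd hA0 hBn hband
    have hcov : ∀ t : ℤ, 1 ≤ t → t ≤ nDim l →
        ∃ k, BezAux.AA d m k < t ∧ t < BezAux.BB l d m k := by
      intro t ht1 ht2
      have := hnog t ht1 ht2
      unfold BezAux.NG at this
      push_neg at this
      obtain ⟨k, hk1, hk2⟩ := this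
      exact ⟨k, by omega, by omega⟩
    exact BezAux.structure_of_tiled l d m hl hd hA0 hBn hcov
  · rintro ⟨hdef, π, rfl⟩
    exact BezAux.pureBezout_mBez l d hr hl hd hdef π
end

section
/- If a degree vector m ∈ ℤ^r yields a pure Bézout-type complex, then K_2(m) = 0 (so the formula is determinantal), and dim K_0(m) = ∏_k C(m_k + l_k, l_k) = (n! / (l_1!·⋯·l_r!)) · d_1^{l_1}·⋯·d_r^{l_r}, which equals the degree of the multihomogeneous resultant divided by n+1. -/
open Finset

section Aux
variable {r : ℕ} {l d : Fin r → ℕ} {m : Fin r → ℤ}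

lemma nDim_cast (l : Fin r → ℕ) : nDim l = ((∑ k, l k : ℕ) : ℤ) := by
  simp [nDim]

lemma subset_of_nonzero (hd : ∀ k, 0 < d k) {p q : ℤ} {J J' : Finset (Fin r)}
    (hq : SummandNonzero l d m q J') (hp : SummandNonzero l d m p J) (hqp : q ≤ p) :
    J' ⊆ J := by
  intro k hk
  by_contra hkJ
  have h1 := hq.1 k hk
  have h2 := hp.2 k hkJ
  have h3 : q * d k ≤ p * d k :=
    mul_le_mul_of_nonneg_right hqp (by positivity)
  have h4 : (0:ℤ) ≤ l k := Int.natCast_nonneg _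
  linarith

lemma exists_gap (j : ℤ) (hinv : ∀ J, ¬ SummandNonzero l d m j J) :
    ∃ k, m k < j * d k ∧ j * d k ≤ m k + l k := by
  classical
  by_contra h
  push_neg at h
  apply hinv (univ.filter fun k => m k - j * d k ≤ -(l k:ℤ) - 1)
  constructor
  · intro k hk; exact (mem_filter.mp hk).2
  · intro k hk
    rw [mem_filter] at hk
    push_neg at hk
    have hk2 := hk (mem_univ k)
    by_contra h0
    push_neg at h0
    have := h k (by linarith)
    linarith

lemma gap_mem_Ioc (hl : ∀ k, 0 < l k) (hd : ∀ k, 0 < d k) (k : Fin r) {j : ℤ}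
    (h1 : m k < j * d k) (h2 : j * d k ≤ m k + l k) :
    m k / d k < j ∧ j ≤ m k / d k + l k := by
  have hdk : (0:ℤ) < d k := by exact_mod_cast hd k
  have e1 : (m k / d k) * d k ≤ m k := Int.ediv_mul_le _ (ne_of_gt hdk)
  have e2 : m k < (m k / d k + 1) * d k := Int.lt_ediv_add_one_mul_self _ hdk
  constructor
  · by_contra hle
    push_neg at hle
    have : j * d k ≤ (m k / d k) * d k := mul_le_mul_of_nonneg_right hle hdk.le
    linarith
  · by_contra hgt
    push_neg at hgt
    have h3 : (m k / d k + l k + 1) * d k ≤ j * d k :=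
      mul_le_mul_of_nonneg_right (by linarith) hdk.le
    have hlk : (l k : ℤ) ≤ (l k:ℤ) * d k :=
      le_mul_of_one_le_right (Int.natCast_nonneg _) (by exact_mod_cast hd k)
    nlinarith

lemma gap_card (hl : ∀ k, 0 < l k) (hd : ∀ k, 0 < d k) (k : Fin r) (s : Finset ℤ)
    [DecidablePred fun j : ℤ => m k < j * d k ∧ j * d k ≤ m k + l k] :
    (s.filter fun j => m k < j * d k ∧ j * d k ≤ m k + l k).card ≤ l k := by
  have key : (s.filter fun j => m k < j * d k ∧ j * d k ≤ m k + l k) ⊆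
      Finset.Ioc (m k / d k) (m k / d k + l k) := by
    intro j hj
    obtain ⟨-, h1, h2⟩ := mem_filter.mp hj
    exact mem_Ioc.mpr (gap_mem_Ioc hl hd k h1 h2)
  calc _ ≤ (Finset.Ioc (m k / d k) (m k / d k + l k)).card := Finset.card_le_card key
    _ = l k := by rw [Int.card_Ioc]; omega

lemma cover_step (hl : ∀ k, 0 < l k) (hd : ∀ k, 0 < d k) {p q : ℤ}
    {J J' : Finset (Fin r)}
    (hq : SummandNonzero l d m q J') (hp : SummandNonzero l d m p J) (hqp : q < p)
    (hdes : ∀ j : ℤ, q < j → j < p → ∀ J'', ¬ SummandNonzero l d m j J'') :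
    p - ∑ k ∈ J, (l k : ℤ) ≤ q - ∑ k ∈ J', (l k : ℤ) + 1 := by
  classical
  have hsub : J' ⊆ J := subset_of_nonzero hd hq hp hqp.le
  have hsplit : ∑ k ∈ J \ J', (l k:ℤ) + ∑ k ∈ J', (l k:ℤ) = ∑ k ∈ J, (l k:ℤ) :=
    Finset.sum_sdiff hsub
  have hcover : Finset.Ioo q p ⊆ (J \ J').biUnion
      (fun k => (Finset.Ioo q p).filter fun j => m k < j * d k ∧ j * d k ≤ m k + (l k:ℤ)) := by
    intro j hj
    rw [Finset.mem_Ioo] at hj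
    obtain ⟨k, hk1, hk2⟩ := exists_gap j (hdes j hj.1 hj.2)
    have hdk : (1:ℤ) ≤ d k := by exact_mod_cast hd k
    have hlk : (0:ℤ) ≤ l k := Int.natCast_nonneg _
    have hkJ : k ∈ J := by
      by_contra hkJ
      have h2 := hp.2 k hkJ
      have h3 : (j+1) * d k ≤ p * d k :=
        mul_le_mul_of_nonneg_right (by linarith [hj.2]) (by linarith)
      nlinarith
    have hkJ' : k ∉ J' := by
      intro hkJ'
      have h1 := hq.1 k hkJ'
      have h3 : (q+1) * d k ≤ j * d k :=
        mul_le_mul_of_nonneg_right (by linarith [hj.1]) (by linarith)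
      nlinarith
    exact Finset.mem_biUnion.mpr ⟨k, Finset.mem_sdiff.mpr ⟨hkJ, hkJ'⟩,
      Finset.mem_filter.mpr ⟨Finset.mem_Ioo.mpr hj, hk1, hk2⟩⟩
  have hcardN : (Finset.Ioo q p).card ≤ ∑ k ∈ J \ J', l k := by
    calc (Finset.Ioo q p).card ≤ _ := Finset.card_le_card hcover
      _ ≤ ∑ k ∈ J \ J', ((Finset.Ioo q p).filter
            fun j => m k < j * d k ∧ j * d k ≤ m k + (l k:ℤ)).card :=
          Finset.card_biUnion_le
      _ ≤ ∑ k ∈ J \ J', l k := Finset.sum_le_sum fun k _ => gap_card hl hd k _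
  have hIoo : ((Finset.Ioo q p).card : ℤ) = (p - q - 1).toNat := by
    rw [Int.card_Ioo]
  have h1 : p - q - 1 ≤ ((Finset.Ioo q p).card : ℤ) := by
    rw [hIoo]; exact Int.self_le_toNat _
  have h2 : ((Finset.Ioo q p).card : ℤ) ≤ ∑ k ∈ J \ J', (l k : ℤ) := by
    exact_mod_cast hcardN
  linarith

end Aux

section Aux2
variable {r : ℕ} {l d : Fin r → ℕ} {m : Fin r → ℤ}


lemma S_up (hl : ∀ k, 0 < l k) (hd : ∀ k, 0 < d k) (hB : PureBezout l d m) :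
    ∀ N : ℕ, ∀ p : ℤ, 0 ≤ p → p ≤ N → p ≤ (∑ k, (l k : ℤ)) →
      ∀ J, SummandNonzero l d m p J → p - ∑ k ∈ J, (l k:ℤ) ≤ 0 := by
  classical
  intro N
  induction N with
  | zero =>
    intro p h0 hN hn J hJ
    have hp0 : p = 0 := by omega
    subst hp0
    have hJe : J = ∅ := by
      rw [Finset.eq_empty_iff_forall_notMem]
      intro k hk
      have h1 := hJ.1 k hk
      have h2 := hB.2.1.2 k (Finset.notMem_empty k)
      have h4 : (0:ℤ) ≤ l k := Int.natCast_nonneg _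
      simp at h1 h2
      linarith
    simp [hJe]
  | succ N ih =>
    intro p h0 hN hn J hJ
    by_cases hpN : p ≤ N
    · exact ih p h0 hpN hn J hJ
    have hp : p = (N:ℤ) + 1 := by omega
    set P : ℕ → Prop := fun t => ∃ J', SummandNonzero l d m (t:ℤ) J' with hPdef
    have hP0 : P 0 := ⟨∅, by exact_mod_cast hB.2.1⟩
    have hq : P (Nat.findGreatest P N) := Nat.findGreatest_spec (Nat.zero_le N) hP0
    set q := Nat.findGreatest P N with hqdef
    have hqN : q ≤ N := Nat.findGreatest_le N
    obtain ⟨J', hJ'⟩ := hq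
    have hdes : ∀ j : ℤ, (q:ℤ) < j → j < p → ∀ J'', ¬ SummandNonzero l d m j J'' := by
      intro j hj1 hj2 J'' hcon
      have hj0 : (0:ℤ) ≤ j := by
        have : (0:ℤ) ≤ (q:ℤ) := Int.natCast_nonneg _
        omega
      have hjt : ((j.toNat : ℤ)) = j := Int.toNat_of_nonneg hj0
      have h1 : q < j.toNat := by omega
      have h2 : j.toNat ≤ N := by omega
      exact Nat.findGreatest_is_greatest h1 h2 ⟨J'', by rwa [hjt]⟩
    have hstep := cover_step hl hd hJ' hJ (show (q:ℤ) < p by omega) hdes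
    have hIH := ih (q:ℤ) (Int.natCast_nonneg _) (by exact_mod_cast hqN)
      (by omega) J' hJ'
    have hnu : p - ∑ k ∈ J, (l k:ℤ) ≤ 1 := by linarith
    have hple : p ≤ nDim l + 1 := by rw [nDim]; omega
    have hne1 : p - ∑ k ∈ J, (l k:ℤ) ≠ 1 := by
      intro he
      exact hB.2.2.2.2 p h0 hple J (by rw [nDim]; omega) he hJ
    have hne0 : p - ∑ k ∈ J, (l k:ℤ) ≠ 0 := by
      intro he
      have hJne : J ≠ ∅ := by
        intro hempty
        rw [hempty] at he
        simp at he
        omega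
      exact hB.2.2.1 p h0 hple J hJne he hJ
    omega

lemma nonzero_top_univ (hl : ∀ k, 0 < l k) (hd : ∀ k, 0 < d k) (hB : PureBezout l d m)
    {J : Finset (Fin r)} (hJ : SummandNonzero l d m (nDim l + 1) J) : J = Finset.univ := by
  rw [Finset.eq_univ_iff_forall]
  intro k
  by_contra hk
  have h2 := hJ.2 k hk
  have h1 := hB.2.2.2.1.1 k (Finset.mem_univ k)
  have h4 : (0:ℤ) ≤ l k := Int.natCast_nonneg _
  linarith

lemma S_down (hl : ∀ k, 0 < l k) (hd : ∀ k, 0 < d k) (hB : PureBezout l d m) :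
    ∀ N : ℕ, ∀ p : ℤ, (∑ k, (l k : ℤ)) + 1 - N ≤ p → 1 ≤ p → p ≤ (∑ k, (l k : ℤ)) + 1 →
      ∀ J, SummandNonzero l d m p J → 1 ≤ p - ∑ k ∈ J, (l k:ℤ) := by
  classical
  have hnd : nDim l = ∑ k, (l k : ℤ) := rfl
  intro N
  induction N with
  | zero =>
    intro p hlow h1 hhigh J hJ
    have hp : p = nDim l + 1 := by rw [hnd]; omega
    subst hp
    have hJu : J = Finset.univ := nonzero_top_univ hl hd hB hJ
    subst hJu
    rw [← hnd]
    simp [nDim]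
  | succ N ih =>
    intro p hlow h1 hhigh J hJ
    by_cases hpN : (∑ k, (l k : ℤ)) + 1 - N ≤ p
    · exact ih p hpN h1 hhigh J hJ
    push_neg at hpN
    -- p ≤ n, find least valid q > p
    have hpn : p ≤ ∑ k, (l k:ℤ) := by omega
    set P : ℕ → Prop := fun t => ∃ J', SummandNonzero l d m (p + 1 + t) J' with hPdef
    have hwit : P ((∑ k, (l k : ℤ)) - p).toNat := by
      refine ⟨Finset.univ, ?_⟩
      have : p + 1 + (((∑ k, (l k : ℤ)) - p).toNat : ℤ) = nDim l + 1 := by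
        rw [hnd]; omega
      rw [this]
      exact hB.2.2.2.1
    have hEx : ∃ t, P t := ⟨_, hwit⟩
    set t0 := Nat.find hEx with ht0
    obtain ⟨J₂, hJ₂⟩ := Nat.find_spec hEx
    set q : ℤ := p + 1 + t0 with hqdef
    have hqle : q ≤ (∑ k, (l k : ℤ)) + 1 := by
      have : t0 ≤ ((∑ k, (l k : ℤ)) - p).toNat := Nat.find_min' hEx hwit
      omega
    have hdes : ∀ j : ℤ, p < j → j < q → ∀ J'', ¬ SummandNonzero l d m j J'' := by
      intro j hj1 hj2 J'' hcon
      have h1 : (j - p - 1).toNat < t0 := by omega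
      refine Nat.find_min hEx h1 ⟨J'', ?_⟩
      have : p + 1 + ((j - p - 1).toNat : ℤ) = j := by omega
      rwa [this]
    have hstep := cover_step hl hd hJ hJ₂ (show p < q by omega) hdes
    have hIH := ih q (by omega) (by omega) hqle J₂ hJ₂
    have hnu : 0 ≤ p - ∑ k ∈ J, (l k:ℤ) := by linarith
    have hne0 : p - ∑ k ∈ J, (l k:ℤ) ≠ 0 := by
      intro he
      have hJne : J ≠ ∅ := by
        intro hempty
        rw [hempty] at he
        simp at he
        omega
      exact hB.2.2.1 p (by omega) (by rw [hnd]; omega) J hJne he hJ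
    omega

lemma invalid_mid (hl : ∀ k, 0 < l k) (hd : ∀ k, 0 < d k) (hB : PureBezout l d m)
    {p : ℤ} (h1 : 1 ≤ p) (h2 : p ≤ ∑ k, (l k : ℤ)) :
    ∀ J, ¬ SummandNonzero l d m p J := by
  intro J hJ
  have hup := S_up hl hd hB (∑ k, l k) p (by omega)
    (by rw [← nDim_cast, nDim]; omega) (by omega) J hJ
  have hdown := S_down hl hd hB ((∑ k, l k) + 1) p
    (by rw [show (((∑ k, l k) + 1 : ℕ) : ℤ) = ((∑ k, l k : ℕ) : ℤ) + 1 by push_cast; ring,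
      ← nDim_cast, nDim]; omega) h1 (by omega) J hJ
  omega

end Aux2

section Aux3
variable {r : ℕ} {l : Fin r → ℕ}

lemma tile (hl : ∀ k, 0 < l k) (e : Fin r → ℤ) :
    ∀ s : Finset (Fin r),
      s.biUnion (fun k => Finset.Ioc (e k - l k) (e k)) = Finset.Icc 1 (∑ k ∈ s, (l k:ℤ)) →
      ∏ k ∈ s, (e k).toNat.choose (l k) = Nat.multinomial s l := by
  classical
  intro s
  induction s using Finset.strongInduction with
  | _ s ih =>
    intro hU
    rcases s.eq_empty_or_nonempty with rfl | hne
    · simp [Nat.multinomial_empty]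
    · set N : ℤ := ∑ k ∈ s, (l k:ℤ) with hN
      have hN1 : 1 ≤ N := by
        obtain ⟨k0, hk0⟩ := hne
        have h1 : (1:ℤ) ≤ l k0 := by exact_mod_cast hl k0
        have h2 := Finset.single_le_sum (f := fun k => (l k:ℤ))
          (fun i _ => Int.natCast_nonneg _) hk0
        linarith
      have hNmem : N ∈ Finset.Icc (1:ℤ) N := Finset.mem_Icc.mpr ⟨hN1, le_refl N⟩
      rw [← hU] at hNmem
      obtain ⟨k0, hk0s, hk0m⟩ := Finset.mem_biUnion.mp hNmem
      rw [Finset.mem_Ioc] at hk0m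
      have hek0 : e k0 ∈ Finset.Icc (1:ℤ) N := by
        rw [← hU]
        refine Finset.mem_biUnion.mpr ⟨k0, hk0s, Finset.mem_Ioc.mpr ⟨?_, le_refl _⟩⟩
        have : 0 < (l k0 : ℤ) := by exact_mod_cast hl k0
        omega
      have heN : e k0 = N := le_antisymm (Finset.mem_Icc.mp hek0).2 hk0m.2
      set s' := s.erase k0 with hs'
      have hNsplit : (l k0 : ℤ) + ∑ k ∈ s', (l k:ℤ) = N := by
        rw [hN, hs']
        exact Finset.add_sum_erase s (fun k => (l k:ℤ)) hk0s
      have hsub1 : Finset.Icc (1:ℤ) (N - l k0) ⊆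
          s'.biUnion (fun k => Finset.Ioc (e k - l k) (e k)) := by
        intro j hj
        rw [Finset.mem_Icc] at hj
        have hj' : j ∈ Finset.Icc (1:ℤ) N := by
          rw [Finset.mem_Icc]
          have : (0:ℤ) ≤ l k0 := Int.natCast_nonneg _
          omega
        rw [← hU] at hj'
        obtain ⟨k1, hk1s, hk1m⟩ := Finset.mem_biUnion.mp hj'
        have hk1 : k1 ≠ k0 := by
          rintro rfl
          rw [Finset.mem_Ioc] at hk1m
          omega
        exact Finset.mem_biUnion.mpr ⟨k1, Finset.mem_erase.mpr ⟨hk1, hk1s⟩, hk1m⟩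
      have hcard2 : (s'.biUnion (fun k => Finset.Ioc (e k - l k) (e k))).card ≤
          (Finset.Icc (1:ℤ) (N - l k0)).card := by
        calc _ ≤ ∑ k ∈ s', (Finset.Ioc (e k - l k) (e k)).card := Finset.card_biUnion_le
          _ = ∑ k ∈ s', l k := by
            refine Finset.sum_congr rfl fun k _ => ?_
            rw [Int.card_Ioc]; omega
          _ = (Finset.Icc (1:ℤ) (N - l k0)).card := by
            rw [Int.card_Icc]
            have hc : ((∑ k ∈ s', l k : ℕ) : ℤ) = ∑ k ∈ s', (l k : ℤ) := Nat.cast_sum _ _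
            omega
      have hUeq : s'.biUnion (fun k => Finset.Ioc (e k - l k) (e k)) =
          Finset.Icc (1:ℤ) (∑ k ∈ s', (l k:ℤ)) := by
        have h := (Finset.eq_of_subset_of_card_le hsub1 hcard2).symm
        rw [h]
        congr 1
        linarith
      have hIH := ih s' (Finset.erase_ssubset hk0s) hUeq
      have hprod : ∏ k ∈ s, (e k).toNat.choose (l k) =
          (e k0).toNat.choose (l k0) * ∏ k ∈ s', (e k).toNat.choose (l k) :=
        (Finset.mul_prod_erase _ _ hk0s).symm
      have hins : s = insert k0 s' := (Finset.insert_erase hk0s).symm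
      rw [hprod, hIH]
      have hNt : (e k0).toNat = l k0 + ∑ i ∈ s', l i := by
        have hc : ((∑ i ∈ s', l i : ℕ) : ℤ) = ∑ k ∈ s', (l k : ℤ) := Nat.cast_sum _ _
        omega
      rw [hNt]
      conv_rhs => rw [hins]
      rw [Nat.multinomial_insert (Finset.notMem_erase k0 s) l]

end Aux3

section Main
variable {r : ℕ} {l d : Fin r → ℕ} {m : Fin r → ℤ}

lemma sum_pos_of_nonempty (hl : ∀ k, 0 < l k) {J : Finset (Fin r)} (hJ : J ≠ ∅) :
    1 ≤ ∑ k ∈ J, (l k : ℤ) := by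
  obtain ⟨k0, hk0⟩ := Finset.nonempty_iff_ne_empty.mpr hJ
  have h1 : (1:ℤ) ≤ l k0 := by exact_mod_cast hl k0
  have h2 := Finset.single_le_sum (f := fun k => (l k:ℤ))
    (fun i _ => Int.natCast_nonneg _) hk0
  linarith

theorem bezout_determinantal' (r : ℕ) (hr : 0 < r) (l d : Fin r → ℕ)
    (hl : ∀ k, 0 < l k) (hd : ∀ k, 0 < d k)
    (m : Fin r → ℤ) (hB : PureBezout l d m) :
    (∀ p : ℤ, 0 ≤ p → p ≤ nDim l + 1 →
        ∀ J : Finset (Fin r), p - ∑ k ∈ J, (l k : ℤ) = 2 → ¬ SummandNonzero l d m p J) ∧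
    ∏ k, ((m k + (l k : ℤ)).toNat.choose (l k)) =
      Nat.multinomial Finset.univ l * ∏ k, d k ^ l k := by
  classical
  have hnd : nDim l = ∑ k, (l k : ℤ) := rfl
  have hndc : nDim l = ((∑ k, l k : ℕ) : ℤ) := nDim_cast l
  have F0 : ∀ k, 0 ≤ m k := by
    intro k
    have := hB.2.1.2 k (Finset.notMem_empty k)
    simpa using this
  have F1 : ∀ k, m k - (nDim l + 1) * d k ≤ -(l k:ℤ) - 1 :=
    fun k => hB.2.2.2.1.1 k (Finset.mem_univ k)
  constructor
  · -- K_2 = 0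
    intro p h0 hple J hsum hnz
    have hSig0 : 0 ≤ ∑ k ∈ J, (l k:ℤ) :=
      Finset.sum_nonneg fun i _ => Int.natCast_nonneg _
    have hp1 : 1 ≤ p := by omega
    rw [hnd] at hple
    by_cases hpn : p ≤ ∑ k, (l k:ℤ)
    · exact invalid_mid hl hd hB hp1 hpn J hnz
    · have hp : p = (∑ k, (l k:ℤ)) + 1 := by omega
      have hJu : J ≠ Finset.univ := by
        rintro rfl
        omega
      obtain ⟨k, hk⟩ : ∃ k, k ∉ J := by
        by_contra h
        push_neg at h
        exact hJu (Finset.eq_univ_iff_forall.mpr h)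
      have h2 := hnz.2 k hk
      have h1 := F1 k
      rw [hnd] at h1
      rw [hp] at h2
      have h4 : (0:ℤ) ≤ l k := Int.natCast_nonneg _
      linarith
  · -- product formula
    have hinv : ∀ p : ℤ, 1 ≤ p → p ≤ ∑ k, (l k:ℤ) →
        ∀ J, ¬ SummandNonzero l d m p J :=
      fun p h1 h2 => invalid_mid hl hd hB h1 h2
    set G : Fin r → Finset ℤ := fun k =>
      (Finset.Icc (1:ℤ) ((∑ k, l k : ℕ) : ℤ)).filter
        (fun j => m k < j * d k ∧ j * d k ≤ m k + l k) with hGdef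
    have hG_sub : ∀ k, G k ⊆ Finset.Ioc (m k / d k) (m k / d k + l k) := by
      intro k j hj
      obtain ⟨-, h1, h2⟩ := Finset.mem_filter.mp hj
      exact Finset.mem_Ioc.mpr (gap_mem_Ioc hl hd k h1 h2)
    have hUnion : Finset.univ.biUnion G = Finset.Icc (1:ℤ) ((∑ k, l k : ℕ) : ℤ) := by
      apply Finset.Subset.antisymm
      · exact Finset.biUnion_subset.mpr fun k _ => Finset.filter_subset _ _
      · intro j hj
        rw [Finset.mem_Icc] at hj
        have hj2 : j ≤ ∑ k, (l k:ℤ) := by rw [← hndc, hnd] at hj; exact hj.2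
        obtain ⟨k, h1, h2⟩ := exists_gap j (hinv j hj.1 hj2)
        exact Finset.mem_biUnion.mpr ⟨k, Finset.mem_univ k,
          Finset.mem_filter.mpr ⟨Finset.mem_Icc.mpr hj, h1, h2⟩⟩
    have hcard_le : ∀ k, (G k).card ≤ l k := fun k => gap_card hl hd k _
    have hsum_ge : ∑ k, l k ≤ ∑ k, (G k).card := by
      have hIcc : (Finset.Icc (1:ℤ) ((∑ k, l k : ℕ) : ℤ)).card = ∑ k, l k := by
        rw [Int.card_Icc]; omega
      calc ∑ k, l k = (Finset.univ.biUnion G).card := by rw [hUnion, hIcc]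
        _ ≤ ∑ k, (G k).card := Finset.card_biUnion_le
    have hcard_eq : ∀ k, (G k).card = l k := by
      have heq : ∑ k, (G k).card = ∑ k, l k :=
        le_antisymm (Finset.sum_le_sum fun k _ => hcard_le k) hsum_ge
      intro k
      exact (Finset.sum_eq_sum_iff_of_le (fun i _ => hcard_le i)).mp heq k (Finset.mem_univ k)
    have hGeq : ∀ k, G k = Finset.Ioc (m k / d k) (m k / d k + l k) := by
      intro k
      refine Finset.eq_of_subset_of_card_le (hG_sub k) ?_
      rw [Int.card_Ioc]
      have := hcard_eq k
      omega
    set e : Fin r → ℤ := fun k => m k / d k + l k with hedef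
    have htop : ∀ k, m k < e k * d k ∧ e k * d k ≤ m k + l k := by
      intro k
      have hmem : e k ∈ G k := by
        rw [hGeq k, Finset.mem_Ioc]
        have : (0:ℤ) < l k := by exact_mod_cast hl k
        constructor <;> simp [hedef] <;> omega
      exact (Finset.mem_filter.mp hmem).2
    have hme : ∀ k, m k + l k = e k * d k ∧ (d k = 1 ∨ l k = 1) := by
      intro k
      have hdk : (0:ℤ) < d k := by exact_mod_cast hd k
      have hlk : (1:ℤ) ≤ l k := by exact_mod_cast hl k
      have e2 : m k < (m k / d k + 1) * d k := Int.lt_ediv_add_one_mul_self _ hdk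
      have ht1 := (htop k).1
      have ht2 := (htop k).2
      have hek : e k = m k / d k + l k := rfl
      have hfact : ((l k:ℤ) - 1) * ((d k:ℤ) - 1) ≤ 0 := by nlinarith
      have hcase : (d k = 1 ∨ l k = 1) := by
        by_cases h : l k = 1
        · right; exact h
        · left
          have h2 : (2:ℤ) ≤ l k := by
            have h3 : 2 ≤ l k := by have := hl k; omega
            exact_mod_cast h3
          have hd1 : (d k : ℤ) ≤ 1 := by nlinarith
          have hge : (1:ℤ) ≤ d k := by exact_mod_cast hd k
          exact_mod_cast le_antisymm hd1 hge
      refine ⟨?_, hcase⟩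
      rcases hcase with h | h
      · have hd1 : (d k : ℤ) = 1 := by exact_mod_cast h
        rw [hek, hd1]
        simp
      · have hl1 : (l k : ℤ) = 1 := by exact_mod_cast h
        rw [hl1] at ht2 ⊢
        omega
    have hEchoose : ∀ k, (m k + (l k:ℤ)).toNat.choose (l k) =
        (e k).toNat.choose (l k) * d k ^ l k := by
      intro k
      obtain ⟨hmk, hcase⟩ := hme k
      rcases hcase with h | h
      · have hd1 : (d k : ℤ) = 1 := by exact_mod_cast h
        rw [hmk, hd1, mul_one, h, one_pow, mul_one]
      · have hl1 : (l k : ℤ) = 1 := by exact_mod_cast h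
        have hdk : (1:ℤ) ≤ d k := by exact_mod_cast hd k
        have hm0 := F0 k
        have he0 : 0 ≤ e k := by nlinarith [hmk, hl1, hm0, hdk]
        rw [h, pow_one, Nat.choose_one_right, Nat.choose_one_right]
        have hprodc : ((e k).toNat * d k : ℕ) = (m k + 1).toNat := by
          have h1 : (((e k).toNat * d k : ℕ) : ℤ) = m k + 1 := by
            push_cast [Int.toNat_of_nonneg he0]
            linarith [hmk, hl1]
          omega
        omega
    have htile_in : Finset.univ.biUnion (fun k => Finset.Ioc (e k - l k) (e k)) =
        Finset.Icc (1:ℤ) (∑ k, (l k:ℤ)) := by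
      have hblocks : ∀ k, Finset.Ioc (e k - (l k:ℤ)) (e k) = G k := by
        intro k
        rw [hGeq k]
        congr 1
        simp [hedef]
      rw [Finset.biUnion_congr rfl fun k _ => hblocks k, hUnion, ← hndc, hnd]
    have hmulti : ∏ k, (e k).toNat.choose (l k) = Nat.multinomial Finset.univ l :=
      tile hl e Finset.univ htile_in
    calc ∏ k, (m k + (l k:ℤ)).toNat.choose (l k)
        = ∏ k, ((e k).toNat.choose (l k) * d k ^ l k) :=
          Finset.prod_congr rfl fun k _ => hEchoose k
      _ = (∏ k, (e k).toNat.choose (l k)) * ∏ k, d k ^ l k := Finset.prod_mul_distrib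
      _ = Nat.multinomial Finset.univ l * ∏ k, d k ^ l k := by rw [hmulti]

end Main


section Final
variable {r : ℕ} {l d : Fin r → ℕ} {m : Fin r → ℤ}

/-- A pure Bézout-type complex is determinantal (`K_2(m) = 0`), and
`dim K_0(m) = ∏_k C(m_k + l_k, l_k)` equals the multinomial coefficient times
`d_1^{l_1} ⋯ d_r^{l_r}`, i.e. the degree of the multihomogeneous resultant divided
by `n + 1`. -/
theorem bezout_determinantal (r : ℕ) (hr : 0 < r) (l d : Fin r → ℕ) (hl : ∀ k, 0 < l k) (hd : ∀ k, 0 < d k)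
    (m : Fin r → ℤ) (hB : PureBezout l d m) :
    Kvanish l d m 2 ∧
    dimK l d m 0 = ∏ k, ((m k + (l k : ℤ)).toNat.choose (l k)) ∧
    dimK l d m 0 = Nat.multinomial Finset.univ l * ∏ k, d k ^ l k ∧
    ((∑ k, l k) + 1) * dimK l d m 0 =
      ((∑ k, l k) + 1) * (Nat.multinomial Finset.univ l * ∏ k, d k ^ l k) := by
  classical
  have main := bezout_determinantal' r hr l d hl hd m hB
  have hK2 : Kvanish l d m 2 := main.1
  have h00 : dimSummand l d m 0 ∅ = ∏ k, (m k + (l k:ℤ)).toNat.choose (l k) := by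
    rw [dimSummand, if_pos hB.2.1, Finset.prod_empty, one_mul, Finset.compl_empty]
    refine Finset.prod_congr rfl fun k _ => ?_
    norm_num
  have hfilter0 : (Finset.univ.filter
      (fun J : Finset (Fin r) => (0:ℤ) - ∑ k ∈ J, (l k : ℤ) = 0)) = {∅} := by
    ext J
    simp only [Finset.mem_filter, Finset.mem_univ, true_and, Finset.mem_singleton,
      zero_sub, neg_eq_zero]
    constructor
    · intro hJ
      by_contra hne
      have := sum_pos_of_nonempty hl hne
      omega
    · rintro rfl; simp
  have hdim : dimK l d m 0 = ∏ k, (m k + (l k:ℤ)).toNat.choose (l k) := by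
    rw [dimK, Finset.sum_eq_single 0]
    · simp only [Nat.cast_zero, Nat.choose_zero_right, one_mul]
      rw [hfilter0, Finset.sum_singleton, h00]
    · intro p hp hp0
      rw [Finset.mem_range] at hp
      have hinner : (∑ J ∈ Finset.univ.filter
          (fun J : Finset (Fin r) => (p : ℤ) - ∑ k ∈ J, (l k : ℤ) = 0),
          dimSummand l d m (p : ℤ) J) = 0 := by
        refine Finset.sum_eq_zero fun J hJ => ?_
        rw [Finset.mem_filter] at hJ
        have hnu := hJ.2
        have hJne : J ≠ ∅ := by
          rintro rfl
          simp only [Finset.sum_empty, sub_zero] at hnu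
          exact hp0 (by exact_mod_cast hnu)
        rw [dimSummand, if_neg]
        refine hB.2.2.1 (p:ℤ) (Int.natCast_nonneg _) ?_ J hJne hnu
        rw [nDim_cast l]
        have : p ≤ (∑ k, l k) + 1 := by omega
        exact_mod_cast this
      rw [hinner, mul_zero]
    · intro h
      exact absurd (Finset.mem_range.mpr (by omega)) h
  refine ⟨hK2, hdim, ?_, ?_⟩
  · rw [hdim]; exact main.2
  · rw [hdim, main.2]

end Final
end

section
/- Assume δ_k = 0 for all k = 1,…,r. Then for any permutation π of {1,…,r}, one has m^π + m^{π′} = ρ, where π′ is the dual permutation π′(i) = r + 1 − π(i), m^π is the Bézout degree vector m^π_k = −l_k + d_k·Σ_{j : π(j) ≥ π(k)} l_j (and similarly for m^{π′}), and ρ is the critical degree vector. -/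
open Finset

/-- If all defects vanish, then for any permutation `π` and its dual `π′ = rev ∘ π`,
the Bézout degree vectors satisfy `m^π + m^{π′} = ρ`, the critical degree vector. -/
theorem bezout_duality (r : ℕ) (hr : 0 < r) (l d : Fin r → ℕ) (hl : ∀ k, 0 < l k) (hd : ∀ k, 0 < d k)
    (hδ : ∀ k, defect l d k = 0) (π π' : Equiv.Perm (Fin r))
    (hπ' : ∀ i, π' i = Fin.rev (π i)) (k : Fin r) :
    mBez l d π k + mBez l d π' k = critical l d k := by
  -- From defect = 0, deduce d k = 1 ∨ l k = 1
  have hcase : d k = 1 ∨ l k = 1 := by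
    have h := hδ k
    unfold defect at h
    have h1 : ((l k : ℤ) - 1 : ℤ) < ⌈(l k : ℚ) / (d k : ℚ)⌉ := by omega
    rw [Int.lt_ceil] at h1
    have hdpos : (0 : ℚ) < (d k : ℚ) := by exact_mod_cast hd k
    rw [lt_div_iff₀ hdpos] at h1
    have h2 : ((l k : ℤ) - 1) * (d k : ℤ) < (l k : ℤ) := by exact_mod_cast h1
    by_contra hcon
    push_neg at hcon
    have hd2 : 2 ≤ (d k : ℤ) := by
      have := hd k; have := hcon.1; omega
    have hl2 : 2 ≤ (l k : ℤ) := by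
      have := hl k; have := hcon.2; omega
    nlinarith
  -- sum identity
  have hsum : (∑ j ∈ Finset.univ.filter (fun j => π k ≤ π j), (l j : ℤ)) +
      (∑ j ∈ Finset.univ.filter (fun j => π' k ≤ π' j), (l j : ℤ)) =
      (∑ j, (l j : ℤ)) + l k := by
    have hrev : ∀ j, (π' k ≤ π' j) ↔ (π j ≤ π k) := by
      intro j; rw [hπ' k, hπ' j, Fin.rev_le_rev]
    rw [Finset.sum_filter, Finset.sum_filter, ← Finset.sum_add_distrib]
    have : ∀ j, ((if π k ≤ π j then (l j : ℤ) else 0) +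
        (if π' k ≤ π' j then (l j : ℤ) else 0)) =
        (l j : ℤ) + (if j = k then (l j : ℤ) else 0) := by
      intro j
      by_cases hjk : j = k
      · subst hjk; simp [hrev]
      · have hne : π j ≠ π k := fun h => hjk (π.injective h)
        rcases le_or_gt (π k) (π j) with h | h
        · rw [if_pos h, if_neg (fun h' => hne (le_antisymm ((hrev j).mp h') h)),
            if_neg hjk]
          try ring
        · rw [if_neg (not_le.mpr h), if_pos ((hrev j).mpr h.le), if_neg hjk]
          try ring
    rw [Finset.sum_congr rfl (fun j _ => this j), Finset.sum_add_distrib]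
    simp
  unfold mBez critical nDim
  have hlk := hl k
  rcases hcase with h1 | h1 <;> nlinarith [hsum, Finset.sum_nonneg (fun j (_ : j ∈ (Finset.univ : Finset (Fin r))) => by positivity : ∀ j ∈ (Finset.univ : Finset (Fin r)), (0:ℤ) ≤ (l j : ℤ))]
end
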